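/- arXiv:1908.03714 — 3 statements merged into one kernel-verified Lean document; each statement's English description precedes it below -/
import Mathlib

section
/- For all integers c ≥ 2 and n ≥ 0, the graphs G(c,n) and G(c, c(n+c−1)) are move equivalent via the moves (O) and (I+). -/
open Classical

/-- A graph in the sense of graph C*-algebras: finitely many vertices,
countably many edges, with source and range maps. -/
structure CKGraph where
  V : Type
  E : Type
  finV : Finite V
  cntE : Countable E
  s : E → V
  r : E → V

attribute [instance] CKGraph.finV CKGraph.cntE

namespace CKGraph

/-- Isomorphism of graphs: bijections on vertices and edges intertwining
the source and range maps. -/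
def Iso (G H : CKGraph) : Prop :=
  ∃ (f : G.V ≃ H.V) (g : G.E ≃ H.E),
    (∀ e, H.s (g e) = f (G.s e)) ∧ (∀ e, H.r (g e) = f (G.r e))

/-- A vertex is a source if it receives no edges. -/
def IsSource (G : CKGraph) (v : G.V) : Prop := ∀ e, G.r e ≠ v

/-- A vertex is a sink if it emits no edges. -/
def IsSink (G : CKGraph) (v : G.V) : Prop := ∀ e, G.s e ≠ v

/-- A vertex is regular if it emits at least one and only finitely many edges. -/
def Regular (G : CKGraph) (v : G.V) : Prop :=
  Nonempty {e : G.E // G.s e = v} ∧ Finite {e : G.E // G.s e = v}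

/-- The outsplit graph of `G` at the vertex `w` with respect to the
partition of `s⁻¹(w)` encoded by `P`. -/
noncomputable def outsplit (G : CKGraph) (w : G.V) (n : ℕ)
    (P : {e : G.E // G.s e = w} → Fin n) : CKGraph where
  V := {v : G.V // v ≠ w} ⊕ Fin n
  E := {e : G.E // G.r e ≠ w} ⊕ ({e : G.E // G.r e = w} × Fin n)
  finV := inferInstance
  cntE := inferInstance
  s := Sum.elim
    (fun e => if h : G.s e.1 = w then Sum.inr (P ⟨e.1, h⟩) else Sum.inl ⟨G.s e.1, h⟩)
    (fun ei => if h : G.s ei.1.1 = w then Sum.inr (P ⟨ei.1.1, h⟩)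
               else Sum.inl ⟨G.s ei.1.1, h⟩)
  r := Sum.elim
    (fun e => Sum.inl ⟨G.r e.1, e.2⟩)
    (fun ei => Sum.inr ei.2)

/-- Move (O): `H` is obtained from `G` by an outsplit at a non-sink `w`
with respect to a partition of `s⁻¹(w)` into nonempty sets, at most one of
which is infinite. -/
def MoveO (G H : CKGraph) : Prop :=
  ∃ (w : G.V) (n : ℕ) (P : {e : G.E // G.s e = w} → Fin n),
    Nonempty {e : G.E // G.s e = w} ∧
    Function.Surjective P ∧
    (∀ i j : Fin n, {e | P e = i}.Infinite → {e | P e = j}.Infinite → i = j) ∧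
    Iso (G.outsplit w n P) H

/-- The insplit graph of `G` at the regular vertex `w` with respect to the
partition of `r⁻¹(w)` (into possibly empty sets) encoded by `P`. -/
noncomputable def insplit (G : CKGraph) (w : G.V) (n : ℕ)
    (P : {e : G.E // G.r e = w} → Fin n) : CKGraph where
  V := {v : G.V // v ≠ w} ⊕ Fin n
  E := {e : G.E // G.s e ≠ w} ⊕ ({e : G.E // G.s e = w} × Fin n)
  finV := inferInstance
  cntE := inferInstance
  s := Sum.elim
    (fun e => Sum.inl ⟨G.s e.1, e.2⟩)
    (fun ei => Sum.inr ei.2)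
  r := Sum.elim
    (fun e => if h : G.r e.1 = w then Sum.inr (P ⟨e.1, h⟩) else Sum.inl ⟨G.r e.1, h⟩)
    (fun ei => if h : G.r ei.1.1 = w then Sum.inr (P ⟨ei.1.1, h⟩)
               else Sum.inl ⟨G.r ei.1.1, h⟩)

/-- Move (I-): `H` is obtained from `G` by an insplit at a regular vertex `w`
with respect to a partition of `r⁻¹(w)` into `n ≥ 1` possibly empty sets. -/
def MoveIm (G H : CKGraph) : Prop :=
  ∃ (w : G.V) (n : ℕ) (P : {e : G.E // G.r e = w} → Fin n),
    G.Regular w ∧ 1 ≤ n ∧ Iso (G.insplit w n P) H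

/-- Move (I+): `G` and `H` are both obtained from a common graph `K` by
insplitting at the same regular vertex via two partitions with the same
number of (possibly empty) sets. -/
def MoveIp (G H : CKGraph) : Prop :=
  ∃ (K : CKGraph) (w : K.V) (n : ℕ)
    (P Q : {e : K.E // K.r e = w} → Fin n),
    K.Regular w ∧ 1 ≤ n ∧
    Iso (K.insplit w n P) G ∧ Iso (K.insplit w n Q) H

/-- The reduced graph of `G` at a regular vertex `w` supporting no loop. -/
noncomputable def reduce (G : CKGraph) (w : G.V) : CKGraph where
  V := {v : G.V // v ≠ w} ⊕ Unit
  E := {e : G.E // G.s e ≠ w ∧ G.r e ≠ w} ⊕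
       (({e : G.E // G.r e = w} × {f : G.E // G.s f = w}) ⊕ {f : G.E // G.s f = w})
  finV := inferInstance
  cntE := inferInstance
  s := Sum.elim
    (fun e => Sum.inl ⟨G.s e.1, e.2.1⟩)
    (Sum.elim
      (fun ef => if h : G.s ef.1.1 = w then Sum.inr () else Sum.inl ⟨G.s ef.1.1, h⟩)
      (fun _ => Sum.inr ()))
  r := Sum.elim
    (fun e => Sum.inl ⟨G.r e.1, e.2.2⟩)
    (Sum.elim
      (fun ef => if h : G.r ef.2.1 = w then Sum.inr () else Sum.inl ⟨G.r ef.2.1, h⟩)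
      (fun f => if h : G.r f.1 = w then Sum.inr () else Sum.inl ⟨G.r f.1, h⟩))

/-- Move (R+): `H` is obtained from `G` by a unital reduction at a regular
vertex `w` which supports no loop. -/
def MoveRp (G H : CKGraph) : Prop :=
  ∃ w : G.V, G.Regular w ∧ (∀ e : G.E, ¬ (G.s e = w ∧ G.r e = w)) ∧
    Iso (G.reduce w) H

/-- Two graphs are move equivalent via the relation `R` (describing the
allowed moves) if there is a finite sequence of graphs starting at the first,
each obtained from the previous by a move in `R` or the inverse of such a
move, and ending at a graph isomorphic to the second. -/
def MoveEquiv (R : CKGraph → CKGraph → Prop) (G H : CKGraph) : Prop :=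
  ∃ K, Relation.ReflTransGen (fun A B => R A B ∨ R B A) G K ∧ Iso K H

/-- The graph `G(c,n)`: a vertex with `c` loops, receiving `n` edges from a
second (source) vertex; for `n = 0` the source vertex is omitted. -/
def Gcn (c n : ℕ) : CKGraph where
  V := Unit ⊕ Fin (min n 1)
  E := Fin c ⊕ Fin n
  finV := inferInstance
  cntE := inferInstance
  s := Sum.elim (fun _ => Sum.inl ()) (fun e => Sum.inr ⟨0, lt_min e.pos one_pos⟩)
  r := fun _ => Sum.inl ()

/-- The graph with adjacency matrix `A` (the `(i,j)` entry being the number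
of edges from vertex `i` to vertex `j`). -/
def adjGraph {k : ℕ} (A : Fin k → Fin k → ℕ) : CKGraph where
  V := Fin k
  E := (i : Fin k) × (j : Fin k) × Fin (A i j)
  finV := inferInstance
  cntE := inferInstance
  s := fun e => e.1
  r := fun e => e.2.1


/-- Entry-wise product of two 2×2 matrices of natural numbers. -/
def matMul (A B : Fin 2 → Fin 2 → ℕ) : Fin 2 → Fin 2 → ℕ := fun i j => ∑ l, A i l * B l j

/-- Matrix-vector product for 2×2 matrices of natural numbers. -/
def matVec (A : Fin 2 → Fin 2 → ℕ) (D : Fin 2 → ℕ) : Fin 2 → ℕ := fun i => ∑ l, A i l * D l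

def T1 : Fin 2 → Fin 2 → ℕ := ![![1, 1], ![0, 1]]

def T2 : Fin 2 → Fin 2 → ℕ := ![![1, 0], ![1, 1]]

/-- The graph represented by the pair `(D, B)`: the graph `Γ(d₁-1, d₂-1; a)`
with `a i j = b j i + δ i j`. -/
def pairGraph (D : Fin 2 → ℕ) (B : Fin 2 → Fin 2 → ℕ) : CKGraph :=
  adjGraph ![![0, D 0 - 1, D 1 - 1], ![0, B 0 0 + 1, B 1 0], ![0, B 0 1, B 1 1 + 1]]

/-- Number of edges emitted by the auxiliary source attached above vertex
`u_t` in the graph `F(n₁,…,n_k)`; here `n t` denotes `n_{t+1}` (0-indexed). -/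
def srcCount (k : ℕ) (n : Fin k → ℕ) (t : Fin k) : ℕ :=
  if t.val + 1 < k then n t - 1 else n t

/-- The graph `F(n₁,…,n_k)` : vertices `u₀,…,u_{k-1}` (`u₀` a sink), one edge
`u_j → u_{j-1}` for `1 ≤ j ≤ k-1`, and for each `t` a source emitting
`srcCount` edges to `u_t` (present only when that count is positive), so that
the number of paths of length `i` ending at `u₀` is `nᵢ`. -/
def Fgraph (k : ℕ) (n : Fin k → ℕ) : CKGraph where
  V := Fin k ⊕ {t : Fin k // 0 < srcCount k n t}
  E := {j : Fin k // 0 < j.val} ⊕ ((t : Fin k) × Fin (srcCount k n t))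
  finV := inferInstance
  cntE := inferInstance
  s := Sum.elim (fun j => Sum.inl j.1) (fun te => Sum.inr ⟨te.1, te.2.pos⟩)
  r := Sum.elim
    (fun j => Sum.inl ⟨j.1.val - 1, lt_of_le_of_lt (Nat.sub_le _ _) j.1.isLt⟩)
    (fun te => Sum.inl te.1)

/-- The graph `E(n₁,…,n_k)` : a cycle `v₀ → v₁ → ⋯ → v_{k-1} → v₀` together
with a single extra vertex emitting `n i` edges to `v i`; the extra vertex is
omitted when all `n i = 0`. -/
def Egraph (k : ℕ) (n : Fin k → ℕ) : CKGraph where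
  V := Fin k ⊕ {_u : Unit // ∃ i, 0 < n i}
  E := Fin k ⊕ ((i : Fin k) × Fin (n i))
  finV := inferInstance
  cntE := inferInstance
  s := Sum.elim (fun j => Sum.inl j) (fun ie => Sum.inr ⟨(), ⟨ie.1, ie.2.pos⟩⟩)
  r := Sum.elim (fun j => Sum.inl ⟨(j.val + 1) % k, Nat.mod_lt _ j.pos⟩)
    (fun ie => Sum.inl ie.1)

/-- The graph `T k` : vertices `u₀,…,u_k`, countably infinitely many loops at
`u₀` and exactly one edge `u_j → u_{j-1}` for `1 ≤ j ≤ k`. -/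
def Tgraph (k : ℕ) : CKGraph where
  V := Fin (k + 1)
  E := ℕ ⊕ {j : Fin (k + 1) // 0 < j.val}
  finV := inferInstance
  cntE := inferInstance
  s := Sum.elim (fun _ => ⟨0, Nat.succ_pos k⟩) (fun j => j.1)
  r := Sum.elim (fun _ => ⟨0, Nat.succ_pos k⟩)
    (fun j => ⟨j.1.val - 1, lt_of_le_of_lt (Nat.sub_le _ _) j.1.isLt⟩)

/-- One-step reachability: there is an edge from `u` to `v`. -/
def Step (G : CKGraph) (u v : G.V) : Prop := ∃ e, G.s e = u ∧ G.r e = v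

/-- There is a (possibly empty) path from `u` to `v`. -/
def Reaches (G : CKGraph) : G.V → G.V → Prop := Relation.ReflTransGen G.Step

/-- `v` lies on a cycle: there is a nontrivial path from `v` back to `v`. -/
def OnCycle (G : CKGraph) (v : G.V) : Prop := ∃ u, G.Step v u ∧ G.Reaches u v

/-- The core of `G`: the vertices lying on cycles if `G` has a cycle, and
otherwise the sinks. -/
def core (G : CKGraph) (v : G.V) : Prop :=
  ((∃ u, G.OnCycle u) → G.OnCycle v) ∧ ((¬ ∃ u, G.OnCycle u) → G.IsSink v)

/-- A transitional vertex: neither a source nor in the core. -/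
def Transitional (G : CKGraph) (v : G.V) : Prop := ¬ G.IsSource v ∧ ¬ G.core v

/-- The core hypotheses: any two vertices on cycles are mutually connected by
paths; if there is a cycle there are no sinks, otherwise there is exactly one
sink; every vertex reaches the core; and every non-core vertex emits only
finitely many edges. -/
structure CoreHyp (G : CKGraph) : Prop where
  conn : ∀ u v, G.OnCycle u → G.OnCycle v → G.Reaches u v
  noSinks : (∃ v, G.OnCycle v) → ∀ v, ¬ G.IsSink v
  uniqueSink : (¬ ∃ v, G.OnCycle v) → ∃! v, G.IsSink v
  reach : ∀ v, ∃ c, G.core c ∧ G.Reaches v c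
  finEmit : ∀ v, ¬ G.core v → Finite {e : G.E // G.s e = v}

/-- The core subgraph: core vertices together with all edges between them. -/
def coreSubgraph (G : CKGraph) : CKGraph where
  V := {v : G.V // G.core v}
  E := {e : G.E // G.core (G.s e) ∧ G.core (G.r e)}
  finV := inferInstance
  cntE := inferInstance
  s := fun e => ⟨G.s e.1, e.2.1⟩
  r := fun e => ⟨G.r e.1, e.2.2⟩

end CKGraph

open CKGraph

/-!
Outsplitting the loop vertex of `G(c, n)` into singletons gives the graph `H` on vertices
`v⁰, …, vᶜ⁻¹` with one edge `vⁱ → vʲ` for all `i, j` and `n` edges from the source to each `vʲ`.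
`H` is also an insplit of `G(c, cn)` at its loop vertex: loop `ℓ` goes to part `ℓ` and the `cn`
tail edges (those leaving the source) are dealt out `n` to each part. The insplit of `G(c, cn)`
with the same number of parts that puts everything into one part `j` is the graph `B` in which
`vʲ` carries the `c` loops and receives the `cn` tail edges, and each other `vⁱ` is a source
emitting `c` edges to `vʲ`. Finally `B` is the outsplit of the source of `G(c, c(n + c - 1))`
that cuts its `cn + c(c - 1)` edges into one block of `cn` and `c - 1` blocks of `c`. Hence
`G(c, n) →(O) H ~(I+) B ←(O) G(c, c(n + c - 1))`.
-/

namespace CKGraph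

theorem Iso.refl (G : CKGraph) : Iso G G :=
  ⟨Equiv.refl _, Equiv.refl _, fun _ => rfl, fun _ => rfl⟩

theorem moveO_of_iso_outsplit {G H : CKGraph} {w : G.V} {n : ℕ}
    {P : {e : G.E // G.s e = w} → Fin n} [Finite {e : G.E // G.s e = w}]
    (hw : Nonempty {e : G.E // G.s e = w})
    (hP : Function.Surjective P) (hH : Iso (G.outsplit w n P) H) : MoveO G H :=
  ⟨w, n, P, hw, hP, fun _ _ hi _ => absurd (Set.toFinite _) hi, hH⟩

/- Reducible copies of `outsplit`, `insplit` and `Gcn`. They are definitionally equal to the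
originals, but `simp` can only compute with the source and range maps of a split graph when its
vertex and edge types unfold at reducible transparency. -/

noncomputable abbrev outsplitR (G : CKGraph) (w : G.V) (n : ℕ)
    (P : {e : G.E // G.s e = w} → Fin n) : CKGraph where
  V := {v : G.V // v ≠ w} ⊕ Fin n
  E := {e : G.E // G.r e ≠ w} ⊕ ({e : G.E // G.r e = w} × Fin n)
  finV := inferInstance
  cntE := inferInstance
  s := Sum.elim
    (fun e => if h : G.s e.1 = w then Sum.inr (P ⟨e.1, h⟩) else Sum.inl ⟨G.s e.1, h⟩)
    (fun ei => if h : G.s ei.1.1 = w then Sum.inr (P ⟨ei.1.1, h⟩)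
               else Sum.inl ⟨G.s ei.1.1, h⟩)
  r := Sum.elim
    (fun e => Sum.inl ⟨G.r e.1, e.2⟩)
    (fun ei => Sum.inr ei.2)

noncomputable abbrev insplitR (G : CKGraph) (w : G.V) (n : ℕ)
    (P : {e : G.E // G.r e = w} → Fin n) : CKGraph where
  V := {v : G.V // v ≠ w} ⊕ Fin n
  E := {e : G.E // G.s e ≠ w} ⊕ ({e : G.E // G.s e = w} × Fin n)
  finV := inferInstance
  cntE := inferInstance
  s := Sum.elim
    (fun e => Sum.inl ⟨G.s e.1, e.2⟩)
    (fun ei => Sum.inr ei.2)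
  r := Sum.elim
    (fun e => if h : G.r e.1 = w then Sum.inr (P ⟨e.1, h⟩) else Sum.inl ⟨G.r e.1, h⟩)
    (fun ei => if h : G.r ei.1.1 = w then Sum.inr (P ⟨ei.1.1, h⟩)
               else Sum.inl ⟨G.r ei.1.1, h⟩)

abbrev GcnR (c n : ℕ) : CKGraph where
  V := Unit ⊕ Fin (min n 1)
  E := Fin c ⊕ Fin n
  finV := inferInstance
  cntE := inferInstance
  s := Sum.elim (fun _ => Sum.inl ()) (fun e => Sum.inr ⟨0, lt_min e.pos one_pos⟩)
  r := fun _ => Sum.inl ()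

namespace Gcn

variable {c m : ℕ}

def loopEquiv : {e : (GcnR c m).E // (GcnR c m).s e = Sum.inl ()} ≃ Fin c where
  toFun
    | ⟨Sum.inl ℓ, _⟩ => ℓ
    | ⟨Sum.inr _, h⟩ => nomatch h
  invFun ℓ := ⟨Sum.inl ℓ, rfl⟩
  left_inv
    | ⟨Sum.inl _, _⟩ => rfl
    | ⟨Sum.inr _, h⟩ => nomatch h
  right_inv _ := rfl

def tailEquiv : {e : (GcnR c m).E // (GcnR c m).s e ≠ Sum.inl ()} ≃ Fin m where
  toFun
    | ⟨Sum.inl _, h⟩ => absurd rfl h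
    | ⟨Sum.inr k, _⟩ => k
  invFun k := ⟨Sum.inr k, nofun⟩
  left_inv
    | ⟨Sum.inl _, h⟩ => absurd rfl h
    | ⟨Sum.inr _, _⟩ => rfl
  right_inv _ := rfl

def tailVertexEquiv : {u : (GcnR c m).V // u ≠ Sum.inl ()} ≃ Fin (min m 1) where
  toFun
    | ⟨Sum.inl _, h⟩ => absurd rfl h
    | ⟨Sum.inr t, _⟩ => t
  invFun t := ⟨Sum.inr t, nofun⟩
  left_inv
    | ⟨Sum.inl _, h⟩ => absurd rfl h
    | ⟨Sum.inr _, _⟩ => rfl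
  right_inv _ := rfl

abbrev tailVertex (c : ℕ) {m : ℕ} (h : 0 < m) : (GcnR c m).V := Sum.inr ⟨0, lt_min h one_pos⟩

def nonTailVertexEquiv (h : 0 < m) : {u : (GcnR c m).V // u ≠ tailVertex c h} ≃ Fin 1 where
  toFun _ := 0
  invFun _ := ⟨Sum.inl (), nofun⟩
  left_inv := by
    rintro ⟨_ | t, h⟩
    · rfl
    · exact absurd (congrArg Sum.inr (Fin.ext (by have := t.isLt; omega))) h
  right_inv _ := Subsingleton.elim _ _

theorem regular_inl (hc : 0 < c) : (Gcn c m).Regular (Sum.inl ()) :=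
  ⟨⟨loopEquiv.symm ⟨0, hc⟩⟩, .of_equiv _ loopEquiv.symm⟩

instance : Finite (Gcn c m).E := inferInstanceAs (Finite (Fin c ⊕ Fin m))

theorem moveO_outsplit_loopEquiv (hc : 0 < c) :
    MoveO (Gcn c m) ((Gcn c m).outsplit (Sum.inl ()) c loopEquiv) :=
  moveO_of_iso_outsplit ⟨loopEquiv.symm ⟨0, hc⟩⟩ loopEquiv.surjective (Iso.refl _)

def rangePartition (c n : ℕ) :
    {e : (GcnR c (c * n)).E // (GcnR c (c * n)).r e = Sum.inl ()} → Fin c :=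
  fun e => Sum.elim id (fun k => (finProdFinEquiv.symm k).1) e.1

theorem min_mul_one_of_pos (hc : 0 < c) (n : ℕ) : min (c * n) 1 = min n 1 := by
  rcases Nat.eq_zero_or_pos n with rfl | hn
  · simp
  · have := Nat.mul_pos hc hn; omega

theorem iso_insplit_rangePartition (hc : 0 < c) (n : ℕ) :
    Iso ((GcnR c (c * n)).insplitR (Sum.inl ()) c (rangePartition c n))
      ((GcnR c n).outsplitR (Sum.inl ()) c loopEquiv) := by
  have : IsEmpty {e : (GcnR c n).E // (GcnR c n).r e ≠ Sum.inl ()} := ⟨fun e => e.2 rfl⟩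
  refine ⟨Equiv.sumCongr (tailVertexEquiv.trans <|
      (finCongr (min_mul_one_of_pos hc n)).trans tailVertexEquiv.symm) (Equiv.refl _),
    (Equiv.sumCongr (tailEquiv.trans finProdFinEquiv.symm)
      (Equiv.prodCongr loopEquiv (Equiv.refl _))).trans <|
    (Equiv.sumComm _ _).trans <|
    (Equiv.sumCongr (Equiv.prodComm _ _) (Equiv.prodComm _ _)).trans <|
    (Equiv.sumProdDistrib _ _ _).symm.trans <|
    (Equiv.prodCongr (Equiv.subtypeUnivEquiv fun _ => rfl).symm (Equiv.refl _)).trans <|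
    (Equiv.emptySum _ _).symm, ?_, ?_⟩
  -- The copy of the loop `ℓ` starting at `vⁱ` is the copy of the loop `i` ending at `vˡ`, and
  -- the tail edge `(j, t)` of `G(c, cn)` is the copy of the tail edge `t` ending at `vʲ`.
  all_goals
    rintro (⟨_ | k, h⟩ | ⟨⟨ℓ | _, h⟩, i⟩)
    · exact absurd rfl h
    · simp [rangePartition, loopEquiv, tailEquiv, tailVertexEquiv]
    · simp [rangePartition, loopEquiv, tailEquiv, tailVertexEquiv]
    · exact nomatch h

theorem moveIp_outsplit_loopEquiv (n : ℕ) (j : Fin c) :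
    MoveIp ((Gcn c n).outsplit (Sum.inl ()) c loopEquiv)
      ((Gcn c (c * n)).insplit (Sum.inl ()) c fun _ => j) :=
  ⟨Gcn c (c * n), Sum.inl (), c, rangePartition c n, fun _ => j, regular_inl j.pos, j.pos,
    iso_insplit_rangePartition j.pos n, Iso.refl _⟩

def tailSplit (d n : ℕ) :
    Fin ((d + 1) * (n + d)) ≃ Fin ((d + 1) * n) ⊕ (Fin (d + 1) × Fin d) :=
  (finCongr (Nat.mul_add _ _ _)).trans <| finSumFinEquiv.symm.trans <|
    Equiv.sumCongr (Equiv.refl _) finProdFinEquiv.symm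

theorem succ_mul_add_pos {d : ℕ} (hd : 0 < d) (n : ℕ) : 0 < (d + 1) * (n + d) :=
  Nat.mul_pos d.succ_pos (by omega)

/-- The tail edges of `G(d + 1, (d + 1)(n + d))` split as `(d + 1) n` edges, which form one part
(absent when `n = 0`), and the edges `(ℓ, i)` with `i < d`, which form part `i`. -/
def sourcePartition {d : ℕ} (hd : 0 < d) (n : ℕ) :
    {e : (GcnR (d + 1) ((d + 1) * (n + d))).E //
      (GcnR (d + 1) ((d + 1) * (n + d))).s e = tailVertex (d + 1) (succ_mul_add_pos hd n)} →
      Fin (d + min ((d + 1) * n) 1)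
  | ⟨Sum.inl _, h⟩ => nomatch h
  | ⟨Sum.inr k, _⟩ => Sum.elim (fun k' => Fin.natAdd d ⟨0, lt_min k'.pos one_pos⟩)
      (fun q => Fin.castAdd _ q.2) (tailSplit d n k)

theorem iso_outsplit_sourcePartition {d : ℕ} (hd : 0 < d) (n : ℕ) :
    Iso ((GcnR (d + 1) ((d + 1) * (n + d))).outsplitR (tailVertex (d + 1) (succ_mul_add_pos hd n))
        (d + min ((d + 1) * n) 1) (sourcePartition hd n))
      ((GcnR (d + 1) ((d + 1) * n)).insplitR (Sum.inl ()) (d + 1) fun _ => Fin.last d) := by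
  have : IsEmpty {e : (GcnR (d + 1) ((d + 1) * (n + d))).E //
      (GcnR (d + 1) ((d + 1) * (n + d))).r e = tailVertex (d + 1) (succ_mul_add_pos hd n)} :=
    ⟨fun e => Sum.inl_ne_inr e.2⟩
  refine ⟨(Equiv.sumCongr (nonTailVertexEquiv _) finSumFinEquiv.symm).trans <|
      (Equiv.sumAssoc _ _ _).symm.trans <|
      (Equiv.sumCongr ((Equiv.sumComm _ _).trans finSumFinEquiv) tailVertexEquiv.symm).trans <|
      Equiv.sumComm _ _,
    (Equiv.sumEmpty _ _).trans <| (Equiv.subtypeUnivEquiv fun _ => Sum.inl_ne_inr).trans <|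
      (Equiv.sumCongr (Equiv.prodUnique _ (Fin 1)).symm (tailSplit d n)).trans <|
      (Equiv.sumComm _ _).trans <| (Equiv.sumAssoc _ _ _).trans <|
      (Equiv.sumCongr (Equiv.refl _) <| (Equiv.prodSumDistrib _ _ _).symm.trans <|
        Equiv.prodCongr (Equiv.refl _) finSumFinEquiv).trans <|
      (Equiv.sumCongr tailEquiv (Equiv.prodCongr loopEquiv (Equiv.refl _))).symm, ?_, ?_⟩
  -- The loop vertex becomes `vᵈ`, which receives every edge; part `i < d` becomes `vⁱ`, the edge
  -- `(ℓ, i)` being the copy of the loop `ℓ` starting at `vⁱ`; the remaining part is the source.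
  all_goals
    rintro (⟨ℓ | k, h⟩ | ⟨⟨_, h⟩, _⟩)
    · simp [Fin.ext_iff, loopEquiv, tailEquiv, tailVertexEquiv]
    · rcases hk : tailSplit d n k with k' | ⟨ℓ, i⟩ <;>
        simp [hk, sourcePartition, -Fin.natAdd_mk, Fin.ext_iff, loopEquiv, tailEquiv,
          tailVertexEquiv]
    · exact absurd h nofun

theorem sourcePartition_surjective {d : ℕ} (hd : 0 < d) (n : ℕ) :
    Function.Surjective (sourcePartition hd n) := by
  intro p
  obtain ⟨i | t, rfl⟩ := finSumFinEquiv.surjective p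
  · exact ⟨⟨Sum.inr ((tailSplit d n).symm (Sum.inr (0, i))), rfl⟩, by simp [sourcePartition]⟩
  · obtain ⟨_ | _, ht⟩ := t
    · exact ⟨⟨Sum.inr ((tailSplit d n).symm (Sum.inl ⟨0, by omega⟩)), rfl⟩,
        by simp [sourcePartition]⟩
    · omega

theorem moveO_insplit_last {d : ℕ} (hd : 0 < d) (n : ℕ) :
    MoveO (Gcn (d + 1) ((d + 1) * (n + d)))
      ((Gcn (d + 1) ((d + 1) * n)).insplit (Sum.inl ()) (d + 1) fun _ => Fin.last d) :=
  moveO_of_iso_outsplit ⟨⟨Sum.inr ⟨0, succ_mul_add_pos hd n⟩, rfl⟩⟩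
    (sourcePartition_surjective hd n) (iso_outsplit_sourcePartition hd n)

end Gcn
end CKGraph

/-- For all integers `c ≥ 2` and `n ≥ 0`, the graphs `G(c,n)` and
`G(c, c(n+c−1))` are move equivalent via the moves (O) and (I+). -/
theorem Gcn_moveEquiv_O_Iplus (c n : ℕ) (hc : 2 ≤ c) :
    MoveEquiv (fun A B => MoveO A B ∨ MoveIp A B)
      (Gcn c n) (Gcn c (c * (n + c - 1))) := by
  obtain ⟨d, rfl⟩ : ∃ d, c = d + 1 := ⟨c - 1, by omega⟩
  have hd : 0 < d := by omega
  rw [show n + (d + 1) - 1 = n + d by omega]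
  have hH := Gcn.moveO_outsplit_loopEquiv (m := n) d.succ_pos
  have hB := Gcn.moveIp_outsplit_loopEquiv n (Fin.last d)
  have hN := Gcn.moveO_insplit_last hd n
  exact ⟨_, .tail (.tail (.single (.inl (.inl hH))) (.inl (.inr hB))) (.inr (.inl hN)), Iso.refl _⟩
end

section
/- For all integers c ≥ 2 and n ≥ 0, the graphs G(c,n) and G(c, n+c−1) are move equivalent via the moves (O), (I+) and (R+). -/
open Classical

open CKGraph

namespace MEaux
open CKGraph

lemma isoRefl (G : CKGraph) : Iso G G :=
  ⟨Equiv.refl _, Equiv.refl _, fun _ => rfl, fun _ => rfl⟩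

lemma isoSymm {G H : CKGraph} (h : Iso G H) : Iso H G := by
  obtain ⟨f, g, hs, hr⟩ := h
  refine ⟨f.symm, g.symm, fun e => ?_, fun e => ?_⟩
  · conv_rhs => rw [← g.apply_symm_apply e]
    rw [hs, f.symm_apply_apply]
  · conv_rhs => rw [← g.apply_symm_apply e]
    rw [hr, f.symm_apply_apply]

/-- two-vertex graph: `c` loops at `inl ()`, and `W`-indexed edges `inr () → inl ()`. -/
def mkTwo (c : ℕ) (W : Type) [Countable W] : CKGraph where
  V := Unit ⊕ Unit
  E := Fin c ⊕ W
  finV := inferInstance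
  cntE := inferInstance
  s := Sum.elim (fun _ => Sum.inl ()) (fun _ => Sum.inr ())
  r := fun _ => Sum.inl ()

lemma finE_Gcn (c m : ℕ) : Finite (Gcn c m).E := by
  show Finite (Fin c ⊕ Fin m); infer_instance

lemma finE_mkTwo (c : ℕ) (W : Type) [Countable W] [Finite W] : Finite (mkTwo c W).E := by
  show Finite (Fin c ⊕ W); infer_instance

lemma finE_insplit (G : CKGraph) (w : G.V) (n : ℕ) (P : {e : G.E // G.r e = w} → Fin n)
    (hG : Finite G.E) : Finite (G.insplit w n P).E := by
  show Finite ({e : G.E // G.s e ≠ w} ⊕ ({e : G.E // G.s e = w} × Fin n)); infer_instance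

lemma finE_outsplit (G : CKGraph) (w : G.V) (n : ℕ) (P : {e : G.E // G.s e = w} → Fin n)
    (hG : Finite G.E) : Finite (G.outsplit w n P).E := by
  show Finite ({e : G.E // G.r e ≠ w} ⊕ ({e : G.E // G.r e = w} × Fin n)); infer_instance

lemma noInf {α : Type} [Finite α] {k : ℕ} (P : α → Fin k) :
    ∀ i j : Fin k, {e | P e = i}.Infinite → {e | P e = j}.Infinite → i = j :=
  fun _ _ hi _ => absurd hi (Set.not_infinite.mpr (Set.toFinite _))

def subtypeSum {α β : Type} (p : α ⊕ β → Prop) :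
    {x : α ⊕ β // p x} ≃ {a : α // p (Sum.inl a)} ⊕ {b : β // p (Sum.inr b)} where
  toFun x := match x with
    | ⟨.inl a, h⟩ => .inl ⟨a, h⟩
    | ⟨.inr b, h⟩ => .inr ⟨b, h⟩
  invFun x := match x with
    | .inl ⟨a, h⟩ => ⟨.inl a, h⟩
    | .inr ⟨b, h⟩ => ⟨.inr b, h⟩
  left_inv := by rintro ⟨a | b, h⟩ <;> rfl
  right_inv := by rintro (⟨a, h⟩ | ⟨b, h⟩) <;> rfl

def finPred (m : ℕ) : {f : Fin m // f.val ≠ 0} ≃ Fin (m - 1) where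
  toFun f := ⟨f.1.val - 1, by have := f.1.isLt; have := f.2; omega⟩
  invFun k := ⟨⟨k.val + 1, by have := k.isLt; omega⟩, by show k.val + 1 ≠ 0; omega⟩
  left_inv := by
    rintro ⟨⟨v, hv⟩, h⟩
    have h' : v ≠ 0 := h
    apply Subtype.ext; apply Fin.ext; show v - 1 + 1 = v; omega
  right_inv := by rintro ⟨k, hk⟩; apply Fin.ext; show k + 1 - 1 = k; omega

def prodFst {c : ℕ} (T : Type) (i : Fin c) : {p : Fin c × T // p.1 = i} ≃ T where
  toFun p := p.1.2
  invFun t := ⟨(i, t), rfl⟩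
  left_inv := by rintro ⟨⟨a, t⟩, rfl⟩; rfl
  right_inv := fun t => rfl

def Pfull (c m : ℕ) (hc : 0 < c) :
    {e : (Gcn c m).E // (Gcn c m).s e = Sum.inl ()} → Fin c :=
  fun e => Sum.elim id (fun _ => (⟨0, hc⟩ : Fin c)) e.1

def Ppi {c : ℕ} {W : Type} [Countable W] (π : W → Fin c) :
    {e : (mkTwo c W).E // (mkTwo c W).r e = Sum.inl ()} → Fin c :=
  fun e => Sum.elim id π e.1


/-! Evaluation lemmas for the move constructions. -/

section Eval
variable {G : CKGraph} {w : G.V} {n : ℕ}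

lemma outsplit_s_pair (P : {e : G.E // G.s e = w} → Fin n)
    (e : {e : G.E // G.r e = w}) (i : Fin n) (h : G.s e.1 = w) :
    (G.outsplit w n P).s (.inr (e, i)) = .inr (P ⟨e.1, h⟩) := by
  simp only [outsplit, Sum.elim_inr]
  rw [dif_pos h]

lemma outsplit_s_pair_ne (P : {e : G.E // G.s e = w} → Fin n)
    (e : {e : G.E // G.r e = w}) (i : Fin n) (h : ¬ G.s e.1 = w) :
    (G.outsplit w n P).s (.inr (e, i)) = .inl ⟨G.s e.1, h⟩ := by
  simp only [outsplit, Sum.elim_inr]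
  rw [dif_neg h]

lemma outsplit_s_inl (P : {e : G.E // G.s e = w} → Fin n)
    (e : {e : G.E // G.r e ≠ w}) (h : G.s e.1 = w) :
    (G.outsplit w n P).s (.inl e) = .inr (P ⟨e.1, h⟩) := by
  simp only [outsplit, Sum.elim_inl]
  rw [dif_pos h]

lemma outsplit_s_inl_ne (P : {e : G.E // G.s e = w} → Fin n)
    (e : {e : G.E // G.r e ≠ w}) (h : ¬ G.s e.1 = w) :
    (G.outsplit w n P).s (.inl e) = .inl ⟨G.s e.1, h⟩ := by
  simp only [outsplit, Sum.elim_inl]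
  rw [dif_neg h]

lemma outsplit_r_pair (P : {e : G.E // G.s e = w} → Fin n)
    (e : {e : G.E // G.r e = w}) (i : Fin n) :
    (G.outsplit w n P).r (.inr (e, i)) = .inr i := rfl

lemma outsplit_r_inl (P : {e : G.E // G.s e = w} → Fin n)
    (e : {e : G.E // G.r e ≠ w}) :
    (G.outsplit w n P).r (.inl e) = .inl ⟨G.r e.1, e.2⟩ := rfl

lemma insplit_s_inl (P : {e : G.E // G.r e = w} → Fin n)
    (e : {e : G.E // G.s e ≠ w}) :
    (G.insplit w n P).s (.inl e) = .inl ⟨G.s e.1, e.2⟩ := rfl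

lemma insplit_s_pair (P : {e : G.E // G.r e = w} → Fin n)
    (e : {e : G.E // G.s e = w}) (i : Fin n) :
    (G.insplit w n P).s (.inr (e, i)) = .inr i := rfl

lemma insplit_r_inl (P : {e : G.E // G.r e = w} → Fin n)
    (e : {e : G.E // G.s e ≠ w}) (h : G.r e.1 = w) :
    (G.insplit w n P).r (.inl e) = .inr (P ⟨e.1, h⟩) := by
  simp only [insplit, Sum.elim_inl]
  rw [dif_pos h]

lemma insplit_r_inl_ne (P : {e : G.E // G.r e = w} → Fin n)
    (e : {e : G.E // G.s e ≠ w}) (h : ¬ G.r e.1 = w) :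
    (G.insplit w n P).r (.inl e) = .inl ⟨G.r e.1, h⟩ := by
  simp only [insplit, Sum.elim_inl]
  rw [dif_neg h]

lemma insplit_r_pair (P : {e : G.E // G.r e = w} → Fin n)
    (e : {e : G.E // G.s e = w}) (i : Fin n) (h : G.r e.1 = w) :
    (G.insplit w n P).r (.inr (e, i)) = .inr (P ⟨e.1, h⟩) := by
  simp only [insplit, Sum.elim_inr]
  rw [dif_pos h]

lemma reduce_s_inl (e : {e : G.E // G.s e ≠ w ∧ G.r e ≠ w}) :
    (G.reduce w).s (.inl e) = .inl ⟨G.s e.1, e.2.1⟩ := rfl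

lemma reduce_r_inl (e : {e : G.E // G.s e ≠ w ∧ G.r e ≠ w}) :
    (G.reduce w).r (.inl e) = .inl ⟨G.r e.1, e.2.2⟩ := rfl

lemma reduce_s_pair (e : {e : G.E // G.r e = w}) (f : {f : G.E // G.s f = w})
    (h : ¬ G.s e.1 = w) :
    (G.reduce w).s (.inr (.inl (e, f))) = .inl ⟨G.s e.1, h⟩ := by
  simp only [reduce, Sum.elim_inr, Sum.elim_inl]
  rw [dif_neg h]

lemma reduce_r_pair (e : {e : G.E // G.r e = w}) (f : {f : G.E // G.s f = w})
    (h : ¬ G.r f.1 = w) :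
    (G.reduce w).r (.inr (.inl (e, f))) = .inl ⟨G.r f.1, h⟩ := by
  simp only [reduce, Sum.elim_inr, Sum.elim_inl]
  rw [dif_neg h]

lemma reduce_s_new (f : {f : G.E // G.s f = w}) :
    (G.reduce w).s (.inr (.inr f)) = .inr () := rfl

lemma reduce_r_new (f : {f : G.E // G.s f = w}) (h : ¬ G.r f.1 = w) :
    (G.reduce w).r (.inr (.inr f)) = .inl ⟨G.r f.1, h⟩ := by
  simp only [reduce, Sum.elim_inr]
  rw [dif_neg h]

end Eval

section IsoA
variable {c μ : ℕ} {W : Type} [Countable W]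

def isoA_V (c μ : ℕ) (hμ : 0 < μ) (W : Type) [Countable W] :
    ({v : (Gcn c μ).V // v ≠ Sum.inl ()} ⊕ Fin c) ≃
      ({v : (mkTwo c W).V // v ≠ Sum.inl ()} ⊕ Fin c) where
  toFun x := match x with
    | .inl _ => .inl ⟨Sum.inr (), fun hh => nomatch hh⟩
    | .inr i => .inr i
  invFun x := match x with
    | .inl _ => .inl ⟨Sum.inr ⟨0, lt_min hμ one_pos⟩, fun hh => nomatch hh⟩
    | .inr i => .inr i
  left_inv := by
    rintro (⟨v, h⟩ | i)
    · rcases v with v | z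
      · exact absurd rfl h
      · have hz := z.isLt
        have h1 : min μ 1 ≤ 1 := min_le_right _ _
        have hz0 : z.val = 0 := by omega
        simp only [Sum.inl.injEq, Subtype.mk.injEq, Sum.inr.injEq]
        apply Subtype.ext
        apply congrArg Sum.inr
        apply Fin.ext
        exact hz0.symm
    · rfl
  right_inv := by
    rintro (⟨v, h⟩ | i)
    · rcases v with v | v
      · exact absurd rfl h
      · rfl
    · rfl

variable (c μ) (W)

def AEto (π : W → Fin c) (φ : ∀ i, {w : W // π w = i} ≃ Fin μ) :
    ({e : (Gcn c μ).E // (Gcn c μ).r e ≠ Sum.inl ()} ⊕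
      ({e : (Gcn c μ).E // (Gcn c μ).r e = Sum.inl ()} × Fin c)) →
    ({e : (mkTwo c W).E // (mkTwo c W).s e ≠ Sum.inl ()} ⊕
      ({e : (mkTwo c W).E // (mkTwo c W).s e = Sum.inl ()} × Fin c)) := fun x =>
  match x with
  | .inl ⟨e, h⟩ => (h rfl).elim
  | .inr (⟨.inl ℓ, _⟩, i) => .inr (⟨.inl i, rfl⟩, ℓ)
  | .inr (⟨.inr f, _⟩, i) =>
      .inl ⟨.inr ((φ i).symm f).1, fun hh => (nomatch hh)⟩

def AEinv (π : W → Fin c) (φ : ∀ i, {w : W // π w = i} ≃ Fin μ) :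
    ({e : (mkTwo c W).E // (mkTwo c W).s e ≠ Sum.inl ()} ⊕
      ({e : (mkTwo c W).E // (mkTwo c W).s e = Sum.inl ()} × Fin c)) →
    ({e : (Gcn c μ).E // (Gcn c μ).r e ≠ Sum.inl ()} ⊕
      ({e : (Gcn c μ).E // (Gcn c μ).r e = Sum.inl ()} × Fin c)) := fun x =>
  match x with
  | .inl ⟨.inl ℓ, h⟩ => (h rfl).elim
  | .inl ⟨.inr w, _⟩ => .inr (⟨.inr (φ (π w) ⟨w, rfl⟩), rfl⟩, π w)
  | .inr (⟨.inl a, _⟩, b) => .inr (⟨.inl b, rfl⟩, a)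
  | .inr (⟨.inr w, h⟩, b) => ((nomatch h) : _)

lemma AEright (π : W → Fin c) (φ : ∀ i, {w : W // π w = i} ≃ Fin μ) :
    ∀ y, AEto c μ W π φ (AEinv c μ W π φ y) = y := by
  rintro (⟨w | w, h⟩ | ⟨⟨a | w, ha⟩, b⟩)
  · exact absurd rfl h
  · dsimp only [AEto, AEinv]
    congr 1
    apply Subtype.ext
    show Sum.inr (((φ (π w)).symm (φ (π w) ⟨w, rfl⟩)).1 : W) = Sum.inr w
    rw [Equiv.symm_apply_apply]
  · rfl
  · exact ((nomatch ha) : _)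

lemma AEinj (π : W → Fin c) (φ : ∀ i, {w : W // π w = i} ≃ Fin μ) :
    Function.Injective (AEto c μ W π φ) := by
  rintro (⟨e, h⟩ | ⟨⟨ℓ | f, he⟩, i⟩) y hxy
  · exact absurd rfl h
  · rcases y with ⟨e', h'⟩ | ⟨⟨ℓ' | f', he'⟩, i'⟩
    · exact absurd rfl h'
    · simp only [AEto, Sum.inr.injEq, Prod.mk.injEq, Subtype.mk.injEq, Sum.inl.injEq] at hxy
      obtain ⟨h1, h2⟩ := hxy
      have h1' : i = i' := Sum.inl.inj (congrArg Subtype.val h1)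
      subst h1'; subst h2; rfl
    · exact (nomatch hxy)
  · rcases y with ⟨e', h'⟩ | ⟨⟨ℓ' | f', he'⟩, i'⟩
    · exact absurd rfl h'
    · exact (nomatch hxy)
    · simp only [AEto, Sum.inl.injEq, Subtype.mk.injEq, Sum.inr.injEq] at hxy
      have hxy' : ((φ i).symm f).1 = ((φ i').symm f').1 := Sum.inr.inj (congrArg Subtype.val hxy)
      have h2 : π ((φ i).symm f).1 = i := ((φ i).symm f).2
      have h2' : π ((φ i').symm f').1 = i' := ((φ i').symm f').2
      have hi : i = i' := by rw [← h2, ← h2', hxy']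
      subst hi
      have hf : (φ i).symm f = (φ i).symm f' := Subtype.ext hxy' 
      have hf2 : f = f' := by
        have := congrArg (φ i) hf
        rwa [Equiv.apply_symm_apply, Equiv.apply_symm_apply] at this
      subst hf2; rfl

def isoA_E (π : W → Fin c) (φ : ∀ i, {w : W // π w = i} ≃ Fin μ) :
    ({e : (Gcn c μ).E // (Gcn c μ).r e ≠ Sum.inl ()} ⊕
      ({e : (Gcn c μ).E // (Gcn c μ).r e = Sum.inl ()} × Fin c)) ≃
    ({e : (mkTwo c W).E // (mkTwo c W).s e ≠ Sum.inl ()} ⊕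
      ({e : (mkTwo c W).E // (mkTwo c W).s e = Sum.inl ()} × Fin c)) where
  toFun := AEto c μ W π φ
  invFun := AEinv c μ W π φ
  right_inv := AEright c μ W π φ
  left_inv := fun x => AEinj c μ W π φ (AEright c μ W π φ (AEto c μ W π φ x))

variable {c μ W}

lemma isoA (hc : 0 < c) (hμ : 0 < μ)
    (π : W → Fin c) (φ : ∀ i, {w : W // π w = i} ≃ Fin μ) :
    Iso ((Gcn c μ).outsplit (Sum.inl ()) c (Pfull c μ hc))
        ((mkTwo c W).insplit (Sum.inl ()) c (Ppi π)) := by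
  refine ⟨isoA_V c μ hμ W, isoA_E c μ W π φ, ?_, ?_⟩
  · rintro (⟨e, h⟩ | ⟨⟨ℓ | f, he⟩, i⟩)
    · exact absurd rfl h
    · show ((mkTwo c W).insplit (Sum.inl ()) c (Ppi π)).s (.inr (⟨.inl i, rfl⟩, ℓ)) =
        isoA_V c μ hμ W (((Gcn c μ).outsplit (Sum.inl ()) c (Pfull c μ hc)).s
          (.inr (⟨.inl ℓ, he⟩, i)))
      rw [outsplit_s_pair (Pfull c μ hc) ⟨.inl ℓ, he⟩ i rfl]
      rfl
    · show ((mkTwo c W).insplit (Sum.inl ()) c (Ppi π)).s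
          (.inl ⟨.inr ((φ i).symm f).1, fun hh => (nomatch hh)⟩) =
        isoA_V c μ hμ W (((Gcn c μ).outsplit (Sum.inl ()) c (Pfull c μ hc)).s
          (.inr (⟨.inr f, he⟩, i)))
      rw [outsplit_s_pair_ne (Pfull c μ hc) ⟨.inr f, he⟩ i (fun hh => nomatch hh)]
      rfl
  · rintro (⟨e, h⟩ | ⟨⟨ℓ | f, he⟩, i⟩)
    · exact absurd rfl h
    · show ((mkTwo c W).insplit (Sum.inl ()) c (Ppi π)).r (.inr (⟨.inl i, rfl⟩, ℓ)) =
        isoA_V c μ hμ W (((Gcn c μ).outsplit (Sum.inl ()) c (Pfull c μ hc)).r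
          (.inr (⟨.inl ℓ, he⟩, i)))
      rw [insplit_r_pair (Ppi π) ⟨.inl i, rfl⟩ ℓ rfl]
      rfl
    · show ((mkTwo c W).insplit (Sum.inl ()) c (Ppi π)).r
          (.inl ⟨.inr ((φ i).symm f).1, fun hh => (nomatch hh)⟩) =
        isoA_V c μ hμ W (((Gcn c μ).outsplit (Sum.inl ()) c (Pfull c μ hc)).r
          (.inr (⟨.inr f, he⟩, i)))
      rw [insplit_r_inl (Ppi π) ⟨.inr ((φ i).symm f).1, fun hh => (nomatch hh)⟩ rfl]
      exact congrArg Sum.inr (((φ i).symm f).2)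

end IsoA

section Zero
variable {c : ℕ}

def PfullR (c : ℕ) (hc : 0 < c) :
    {e : (Gcn c 0).E // (Gcn c 0).r e = Sum.inl ()} → Fin c :=
  fun e => Sum.elim id (fun g => g.elim0) e.1

def Q0 (c : ℕ) (hc : 2 ≤ c) :
    {e : (Gcn c 0).E // (Gcn c 0).r e = Sum.inl ()} → Fin c :=
  fun _ => ⟨1, hc⟩

lemma isoA0 (hc : 2 ≤ c) :
    Iso ((Gcn c 0).insplit (Sum.inl ()) c (PfullR c (by omega)))
        ((Gcn c 0).outsplit (Sum.inl ()) c (Pfull c 0 (by omega))) := by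
  have hc0 : 0 < c := by omega
  refine ⟨Equiv.refl _, ⟨?_, ?_, ?_, ?_⟩, ?_, ?_⟩
  · exact fun x => match x with
    | .inl ⟨.inl ℓ, h⟩ => (h rfl).elim
    | .inl ⟨.inr z, _⟩ => z.elim0
    | .inr (⟨.inl a, _⟩, b) => .inr (⟨.inl b, rfl⟩, a)
    | .inr (⟨.inr z, _⟩, b) => z.elim0
  · exact fun x => match x with
    | .inl ⟨e, h⟩ => (h rfl).elim
    | .inr (⟨.inl ℓ, _⟩, i) => .inr (⟨.inl i, rfl⟩, ℓ)
    | .inr (⟨.inr z, _⟩, i) => z.elim0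
  · rintro (⟨ℓ | z, h⟩ | ⟨⟨a | z, ha⟩, b⟩)
    · exact absurd rfl h
    · exact z.elim0
    · rfl
    · exact z.elim0
  · rintro (⟨e, h⟩ | ⟨⟨ℓ | z, hl⟩, i⟩)
    · exact absurd rfl h
    · rfl
    · exact z.elim0
  · rintro (⟨ℓ | z, h⟩ | ⟨⟨a | z, ha⟩, b⟩)
    · exact absurd rfl h
    · exact z.elim0
    · show ((Gcn c 0).outsplit (Sum.inl ()) c (Pfull c 0 hc0)).s (.inr (⟨.inl b, rfl⟩, a)) =
        Equiv.refl _ (((Gcn c 0).insplit (Sum.inl ()) c (PfullR c hc0)).s (.inr (⟨.inl a, ha⟩, b)))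
      rw [outsplit_s_pair (Pfull c 0 hc0) ⟨.inl b, rfl⟩ a rfl]
      rfl
    · exact z.elim0
  · rintro (⟨ℓ | z, h⟩ | ⟨⟨a | z, ha⟩, b⟩)
    · exact absurd rfl h
    · exact z.elim0
    · show ((Gcn c 0).outsplit (Sum.inl ()) c (Pfull c 0 hc0)).r (.inr (⟨.inl b, rfl⟩, a)) =
        Equiv.refl _ (((Gcn c 0).insplit (Sum.inl ()) c (PfullR c hc0)).r (.inr (⟨.inl a, ha⟩, b)))
      rw [insplit_r_pair (PfullR c hc0) ⟨.inl a, ha⟩ b rfl]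
      rfl
    · exact z.elim0

def N0 (c : ℕ) : ℕ := c - 1 + (c - 1) * (c - 1)

lemma N0_eq (hc : 2 ≤ c) : N0 c = (c - 1) * c := by
  obtain ⟨d, rfl⟩ : ∃ d, c = d + 2 := ⟨c - 2, by omega⟩
  show d + 1 + (d + 1) * (d + 1) = (d + 1) * (d + 2)
  ring

lemma N0_pos (hc : 2 ≤ c) : 0 < N0 c :=
  Nat.lt_of_lt_of_le (by omega) (Nat.le_add_right (c - 1) _)

def ww (c : ℕ) (hc : 2 ≤ c) : (Gcn c (N0 c)).V :=
  Sum.inr ⟨0, lt_min (N0_pos hc) one_pos⟩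

def Pw (c : ℕ) (hc : 2 ≤ c) :
    {e : (Gcn c (N0 c)).E // (Gcn c (N0 c)).s e = ww c hc} → Fin (c - 1) :=
  fun e => Sum.elim (fun _ => ⟨0, by omega⟩)
    (fun g => (finProdFinEquiv.symm (finCongr (N0_eq hc) g)).1) e.1

def skip1 (c : ℕ) (hc : 2 ≤ c) (i : Fin (c - 1)) : Fin c :=
  if i.val = 0 then ⟨0, by omega⟩ else ⟨i.val + 1, by have := i.isLt; omega⟩

def skipInv (c : ℕ) (hc : 2 ≤ c) (b : Fin c) : Fin (c - 1) :=
  if b.val = 0 then ⟨0, by omega⟩ else ⟨b.val - 1, by have := b.isLt; omega⟩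

lemma skip1_val (hc : 2 ≤ c) (i : Fin (c - 1)) :
    (skip1 c hc i).val = if i.val = 0 then 0 else i.val + 1 := by
  rw [skip1]; split <;> rfl

lemma skipInv_val (hc : 2 ≤ c) (b : Fin c) :
    (skipInv c hc b).val = if b.val = 0 then 0 else b.val - 1 := by
  rw [skipInv]; split <;> rfl

lemma skip1_ne_one (hc : 2 ≤ c) (i : Fin (c - 1)) : (skip1 c hc i).val ≠ 1 := by
  rw [skip1_val]; split <;> omega

lemma skipInv_skip1 (hc : 2 ≤ c) (i : Fin (c - 1)) : skipInv c hc (skip1 c hc i) = i := by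
  apply Fin.ext
  rw [skipInv_val, skip1_val]
  have := i.isLt
  split_ifs <;> first | contradiction | omega

lemma skip1_skipInv (hc : 2 ≤ c) (b : Fin c) (hb : b.val ≠ 1) :
    skip1 c hc (skipInv c hc b) = b := by
  apply Fin.ext
  rw [skip1_val, skipInv_val]
  have := b.isLt
  split_ifs <;> first | contradiction | omega

lemma finCongr_cancel {m n : ℕ} (h : m = n) (x : Fin n) :
    finCongr h (finCongr h.symm x) = x := by subst h; rfl

lemma finCongr_cancel' {m n : ℕ} (h : m = n) (x : Fin m) :
    finCongr h.symm (finCongr h x) = x := by subst h; rfl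

def CVto (c : ℕ) (hc : 2 ≤ c) :
    ({v : (Gcn c (N0 c)).V // v ≠ ww c hc} ⊕ Fin (c - 1)) →
      ({v : (Gcn c 0).V // v ≠ Sum.inl ()} ⊕ Fin c) := fun x =>
  match x with
  | .inl ⟨.inl _, _⟩ => .inr ⟨1, hc⟩
  | .inl ⟨.inr z, h⟩ => (h (congrArg Sum.inr (Fin.ext (by
      have := z.isLt
      have h2 : min (N0 c) 1 ≤ 1 := min_le_right _ _
      show z.val = 0
      omega)))).elim
  | .inr i => .inr (skip1 c hc i)

def CVinv (c : ℕ) (hc : 2 ≤ c) :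
    ({v : (Gcn c 0).V // v ≠ Sum.inl ()} ⊕ Fin c) →
      ({v : (Gcn c (N0 c)).V // v ≠ ww c hc} ⊕ Fin (c - 1)) := fun x =>
  match x with
  | .inl ⟨.inl _, h⟩ => (h rfl).elim
  | .inl ⟨.inr z, _⟩ => z.elim0
  | .inr b => if b.val = 1 then .inl ⟨.inl (), fun hh => (nomatch hh)⟩
      else .inr (skipInv c hc b)

def CEto (c : ℕ) (hc : 2 ≤ c) :
    ({e : (Gcn c (N0 c)).E // (Gcn c (N0 c)).r e ≠ ww c hc} ⊕
      ({e : (Gcn c (N0 c)).E // (Gcn c (N0 c)).r e = ww c hc} × Fin (c - 1))) →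
    ({e : (Gcn c 0).E // (Gcn c 0).s e ≠ Sum.inl ()} ⊕
      ({e : (Gcn c 0).E // (Gcn c 0).s e = Sum.inl ()} × Fin c)) := fun x =>
  match x with
  | .inl ⟨.inl ℓ, _⟩ => .inr (⟨.inl ℓ, rfl⟩, ⟨1, hc⟩)
  | .inl ⟨.inr g, _⟩ =>
      .inr (⟨.inl (finProdFinEquiv.symm (finCongr (N0_eq hc) g)).2, rfl⟩,
        skip1 c hc (finProdFinEquiv.symm (finCongr (N0_eq hc) g)).1)
  | .inr (⟨e, he⟩, i) => ((nomatch he) : _)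

def CEinv (c : ℕ) (hc : 2 ≤ c) :
    ({e : (Gcn c 0).E // (Gcn c 0).s e ≠ Sum.inl ()} ⊕
      ({e : (Gcn c 0).E // (Gcn c 0).s e = Sum.inl ()} × Fin c)) →
    ({e : (Gcn c (N0 c)).E // (Gcn c (N0 c)).r e ≠ ww c hc} ⊕
      ({e : (Gcn c (N0 c)).E // (Gcn c (N0 c)).r e = ww c hc} × Fin (c - 1))) := fun x =>
  match x with
  | .inl ⟨.inl ℓ, h⟩ => (h rfl).elim
  | .inl ⟨.inr z, _⟩ => z.elim0
  | .inr (⟨.inl a, _⟩, b) =>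
      if b.val = 1 then .inl ⟨.inl a, fun hh => (nomatch hh)⟩
      else .inl ⟨.inr (finCongr (N0_eq hc).symm (finProdFinEquiv (skipInv c hc b, a))),
        fun hh => (nomatch hh)⟩
  | .inr (⟨.inr z, _⟩, b) => z.elim0

lemma isoC (hc : 2 ≤ c) :
    Iso ((Gcn c (N0 c)).outsplit (ww c hc) (c - 1) (Pw c hc))
        ((Gcn c 0).insplit (Sum.inl ()) c (Q0 c hc)) := by
  refine ⟨⟨CVto c hc, CVinv c hc, ?_, ?_⟩, ⟨CEto c hc, CEinv c hc, ?_, ?_⟩, ?_, ?_⟩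
  · -- vertex left_inv
    rintro (⟨u | z, h⟩ | i)
    · show CVinv c hc (.inr ⟨1, hc⟩) = _
      rw [CVinv, if_pos rfl]
    · exact absurd (congrArg Sum.inr (Fin.ext (by
        have := z.isLt
        have h2 : min (N0 c) 1 ≤ 1 := min_le_right _ _
        show z.val = 0
        omega))) h
    · show CVinv c hc (.inr (skip1 c hc i)) = _
      rw [CVinv]
      simp only [skip1_ne_one hc i, if_false]
      rw [skipInv_skip1]
  · -- vertex right_inv
    rintro (⟨u | z, h⟩ | b)
    · exact absurd rfl h
    · exact z.elim0
    · show CVto c hc (CVinv c hc (.inr b)) = _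
      rw [CVinv]
      by_cases hb : b.val = 1
      · rw [if_pos hb]
        show Sum.inr (⟨1, hc⟩ : Fin c) = _
        exact congrArg Sum.inr (Fin.ext hb.symm)
      · rw [if_neg hb]
        show Sum.inr (skip1 c hc (skipInv c hc b)) = _
        rw [skip1_skipInv hc b hb]
  · -- edge left_inv
    rintro (⟨ℓ | g, h⟩ | ⟨⟨e, he⟩, i⟩)
    · show CEinv c hc (.inr (⟨.inl ℓ, rfl⟩, ⟨1, hc⟩)) = _
      rw [CEinv.eq_def]; dsimp only; rw [if_pos rfl]
    · show CEinv c hc (.inr (⟨.inl (finProdFinEquiv.symm (finCongr (N0_eq hc) g)).2, rfl⟩,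
        skip1 c hc (finProdFinEquiv.symm (finCongr (N0_eq hc) g)).1)) = _
      rw [CEinv.eq_def]; dsimp only
      simp only [skip1_ne_one hc _, if_false]
      apply congrArg Sum.inl
      apply Subtype.ext
      apply congrArg Sum.inr
      rw [skipInv_skip1, Prod.mk.eta, Equiv.apply_symm_apply, finCongr_cancel']
    · exact ((nomatch he) : _)
  · -- edge right_inv
    rintro (⟨ℓ | z, h⟩ | ⟨⟨a | z, ha⟩, b⟩)
    · exact absurd rfl h
    · exact z.elim0
    · show CEto c hc (CEinv c hc (.inr (⟨.inl a, ha⟩, b))) = _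
      rw [CEinv]
      by_cases hb : b.val = 1
      · rw [if_pos hb]
        exact congrArg Sum.inr (Prod.ext rfl (Fin.ext hb.symm))
      · rw [if_neg hb]
        have hq : finProdFinEquiv.symm (finCongr (N0_eq hc)
            (finCongr (N0_eq hc).symm (finProdFinEquiv (skipInv c hc b, a)))) =
            (skipInv c hc b, a) := by
          rw [finCongr_cancel, Equiv.symm_apply_apply]
        refine (congrArg Sum.inr (Prod.ext ?_ ?_) : _)
        · apply Subtype.ext
          apply congrArg Sum.inl
          rw [hq]
        · rw [hq]
          exact skip1_skipInv hc b hb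
    · exact z.elim0
  · -- s compat
    rintro (⟨ℓ | g, h⟩ | ⟨⟨e, he⟩, i⟩)
    · rw [outsplit_s_inl_ne (Pw c hc) ⟨.inl ℓ, h⟩ (fun hh => (nomatch hh))]
      rfl
    · rw [outsplit_s_inl (Pw c hc) ⟨.inr g, h⟩ rfl]
      rfl
    · exact ((nomatch he) : _)
  · -- r compat
    rintro (⟨ℓ | g, h⟩ | ⟨⟨e, he⟩, i⟩)
    · show ((Gcn c 0).insplit (Sum.inl ()) c (Q0 c hc)).r (.inr (⟨.inl ℓ, rfl⟩, ⟨1, hc⟩)) = _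
      rw [insplit_r_pair (Q0 c hc) ⟨.inl ℓ, rfl⟩ ⟨1, hc⟩ rfl]
      rfl
    · show ((Gcn c 0).insplit (Sum.inl ()) c (Q0 c hc)).r
        (.inr (⟨.inl (finProdFinEquiv.symm (finCongr (N0_eq hc) g)).2, rfl⟩,
          skip1 c hc (finProdFinEquiv.symm (finCongr (N0_eq hc) g)).1)) = _
      rw [insplit_r_pair (Q0 c hc) ⟨.inl (finProdFinEquiv.symm (finCongr (N0_eq hc) g)).2, rfl⟩ _ rfl]
      rfl
    · exact ((nomatch he) : _)

end Zero
section IsoB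
variable {c m : ℕ}

def W' (c m : ℕ) : Type := (Fin c × {f : Fin m // f.val ≠ 0}) ⊕ (Fin c × Fin c)

instance : Countable (W' c m) := by unfold W'; infer_instance
instance : Finite (W' c m) := by unfold W'; infer_instance

def Q1 (c m : ℕ) (hc : 2 ≤ c) :
    {e : (mkTwo c (Fin c × Fin m)).E // (mkTwo c (Fin c × Fin m)).r e = Sum.inl ()} → Fin c :=
  fun e => Sum.elim (fun _ => ⟨1, hc⟩)
    (fun p => if p.2.val = 0 then ⟨0, by omega⟩ else ⟨1, hc⟩) e.1

noncomputable def H2 (c m : ℕ) (hc : 2 ≤ c) : CKGraph :=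
  (mkTwo c (Fin c × Fin m)).insplit (Sum.inl ()) c (Q1 c m hc)

noncomputable def x2 (c m : ℕ) (hc : 2 ≤ c) : (H2 c m hc).V := Sum.inr ⟨0, by omega⟩

lemma H2_s_w (hc : 2 ≤ c) (i : Fin c) (f : Fin m) (hw) :
    (H2 c m hc).s (.inl ⟨.inr (i, f), hw⟩) = .inl ⟨.inr (), hw⟩ := rfl

lemma H2_s_l (hc : 2 ≤ c) (a : Fin c) (b : Fin c) (hp) :
    (H2 c m hc).s (.inr (⟨.inl a, hp⟩, b)) = .inr b := rfl

lemma H2_r_w (hc : 2 ≤ c) (i : Fin c) (f : Fin m) (hw) :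
    (H2 c m hc).r (.inl ⟨.inr (i, f), hw⟩) =
      .inr (if f.val = 0 then (⟨0, by omega⟩ : Fin c) else ⟨1, hc⟩) := by
  show ((mkTwo c (Fin c × Fin m)).insplit (Sum.inl ()) c (Q1 c m hc)).r _ = _
  rw [insplit_r_inl (Q1 c m hc) ⟨.inr (i, f), hw⟩ rfl]
  rfl

lemma H2_r_l (hc : 2 ≤ c) (a : Fin c) (b : Fin c) (hp) :
    (H2 c m hc).r (.inr (⟨.inl a, hp⟩, b)) = .inr (⟨1, hc⟩ : Fin c) := by
  show ((mkTwo c (Fin c × Fin m)).insplit (Sum.inl ()) c (Q1 c m hc)).r _ = _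
  rw [insplit_r_pair (Q1 c m hc) ⟨.inl a, hp⟩ b rfl]
  rfl

lemma inl_subtype_congr {α β : Type} {p : α → Prop} {x y : α} {hx : p x} {hy : p y}
    (h : x = y) : (Sum.inl ⟨x, hx⟩ : {a : α // p a} ⊕ β) = Sum.inl ⟨y, hy⟩ := by
  cases h; rfl

noncomputable def BVto (c m : ℕ) (hc : 2 ≤ c) :
    ({v : (mkTwo c (W' c m)).V // v ≠ Sum.inl ()} ⊕ Fin c) →
      ({v : (H2 c m hc).V // v ≠ x2 c m hc} ⊕ Unit) := fun x =>
  match x with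
  | .inl ⟨.inl _, h⟩ => (h rfl).elim
  | .inl ⟨.inr _, _⟩ =>
      .inl ⟨.inl ⟨.inr (), fun hh => (nomatch hh)⟩, fun hh => (nomatch hh)⟩
  | .inr b =>
      if hb : b.val = 0 then .inr ()
      else .inl ⟨.inr b, fun hh => hb (congrArg Fin.val (Sum.inr.inj hh))⟩

noncomputable def BVinv (c m : ℕ) (hc : 2 ≤ c) :
    ({v : (H2 c m hc).V // v ≠ x2 c m hc} ⊕ Unit) →
      ({v : (mkTwo c (W' c m)).V // v ≠ Sum.inl ()} ⊕ Fin c) := fun x =>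
  match x with
  | .inl ⟨.inl ⟨.inl _, h2⟩, _⟩ => (h2 rfl).elim
  | .inl ⟨.inl ⟨.inr _, _⟩, _⟩ => .inl ⟨.inr (), fun hh => (nomatch hh)⟩
  | .inl ⟨.inr b, _⟩ => .inr b
  | .inr _ => .inr ⟨0, by omega⟩

noncomputable def BEto (c m : ℕ) (hc : 2 ≤ c) (hm : 1 ≤ m) :
    ({e : (mkTwo c (W' c m)).E // (mkTwo c (W' c m)).s e ≠ Sum.inl ()} ⊕
      ({e : (mkTwo c (W' c m)).E // (mkTwo c (W' c m)).s e = Sum.inl ()} × Fin c)) →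
    ({e : (H2 c m hc).E // (H2 c m hc).s e ≠ x2 c m hc ∧ (H2 c m hc).r e ≠ x2 c m hc} ⊕
      (({e : (H2 c m hc).E // (H2 c m hc).r e = x2 c m hc} ×
        {f : (H2 c m hc).E // (H2 c m hc).s f = x2 c m hc}) ⊕
        {f : (H2 c m hc).E // (H2 c m hc).s f = x2 c m hc})) := fun x =>
  match x with
  | .inl ⟨.inl ℓ, h⟩ => (h rfl).elim
  | .inl ⟨.inr (.inl (i, f)), _⟩ =>
      .inl ⟨.inl ⟨.inr (i, f.1), fun hh => (nomatch hh)⟩,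
        ⟨fun hh => (nomatch hh),
          by
            rw [H2_r_w hc i f.1 (fun hh => (nomatch hh)), if_neg f.2]
            exact fun hh => Nat.one_ne_zero (congrArg Fin.val (Sum.inr.inj hh))⟩⟩
  | .inl ⟨.inr (.inr (i, a)), _⟩ =>
      .inr (.inl (⟨.inl ⟨.inr (i, ⟨0, hm⟩), fun hh => (nomatch hh)⟩,
          by rw [H2_r_w hc i ⟨0, hm⟩ (fun hh => (nomatch hh)), if_pos rfl]; rfl⟩,
        ⟨.inr (⟨.inl a, rfl⟩, ⟨0, by omega⟩), rfl⟩))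
  | .inr (⟨.inl a, _⟩, b) =>
      if hb : b.val = 0 then
        .inr (.inr ⟨.inr (⟨.inl a, rfl⟩, b), congrArg Sum.inr (Fin.ext hb)⟩)
      else
        .inl ⟨.inr (⟨.inl a, rfl⟩, b),
          ⟨fun hh => hb (congrArg Fin.val (Sum.inr.inj hh)),
            by
              rw [H2_r_l hc a b rfl]
              exact fun hh => Nat.one_ne_zero (congrArg Fin.val (Sum.inr.inj hh))⟩⟩
  | .inr (⟨.inr w, hp⟩, b) => ((nomatch hp) : _)

noncomputable def BEinv (c m : ℕ) (hc : 2 ≤ c) (hm : 1 ≤ m) :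
    ({e : (H2 c m hc).E // (H2 c m hc).s e ≠ x2 c m hc ∧ (H2 c m hc).r e ≠ x2 c m hc} ⊕
      (({e : (H2 c m hc).E // (H2 c m hc).r e = x2 c m hc} ×
        {f : (H2 c m hc).E // (H2 c m hc).s f = x2 c m hc}) ⊕
        {f : (H2 c m hc).E // (H2 c m hc).s f = x2 c m hc})) →
    ({e : (mkTwo c (W' c m)).E // (mkTwo c (W' c m)).s e ≠ Sum.inl ()} ⊕
      ({e : (mkTwo c (W' c m)).E // (mkTwo c (W' c m)).s e = Sum.inl ()} × Fin c)) := fun x =>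
  match x with
  | .inl ⟨.inl ⟨.inl ℓ, h2⟩, _⟩ => (h2 rfl).elim
  | .inl ⟨.inl ⟨.inr (i, f), hw⟩, hcond⟩ =>
      .inl ⟨.inr (.inl (i, ⟨f, fun h0 =>
          hcond.2 (by rw [H2_r_w hc i f hw, if_pos h0]; rfl)⟩)),
        fun hh => (nomatch hh)⟩
  | .inl ⟨.inr (⟨.inl a, hp⟩, b), _⟩ => .inr (⟨.inl a, rfl⟩, b)
  | .inl ⟨.inr (⟨.inr w, hp⟩, b), _⟩ => ((nomatch hp) : _)
  | .inr (.inl (⟨.inl ⟨.inl ℓ, h2⟩, _⟩, _)) => (h2 rfl).elim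
  | .inr (.inl (⟨.inr (⟨.inl a', hp'⟩, b'), her⟩, _)) =>
      absurd her (by
        rw [H2_r_l hc a' b' hp']
        exact fun hh => Nat.one_ne_zero (congrArg Fin.val (Sum.inr.inj hh)))
  | .inr (.inl (⟨.inr (⟨.inr w, hp⟩, b'), _⟩, _)) => ((nomatch hp) : _)
  | .inr (.inl (⟨.inl ⟨.inr (i, f), hw⟩, _⟩, ⟨.inl ⟨_, hw'⟩, hfs⟩)) =>
      ((nomatch hfs) : _)
  | .inr (.inl (⟨.inl ⟨.inr (i, f), hw⟩, _⟩, ⟨.inr (⟨.inl a, hp⟩, b), _⟩)) =>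
      .inl ⟨.inr (.inr (i, a)), fun hh => (nomatch hh)⟩
  | .inr (.inl (⟨.inl ⟨.inr (i, f), hw⟩, _⟩, ⟨.inr (⟨.inr w, hp⟩, b), _⟩)) =>
      ((nomatch hp) : _)
  | .inr (.inr ⟨.inl ⟨_, hw'⟩, hfs⟩) => ((nomatch hfs) : _)
  | .inr (.inr ⟨.inr (⟨.inl a, hp⟩, b), _⟩) => .inr (⟨.inl a, rfl⟩, b)
  | .inr (.inr ⟨.inr (⟨.inr w, hp⟩, b), _⟩) => ((nomatch hp) : _)

lemma isoB (hc : 2 ≤ c) (hm : 1 ≤ m) :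
    Iso ((mkTwo c (W' c m)).insplit (Sum.inl ()) c (fun _ => ⟨1, hc⟩))
        ((H2 c m hc).reduce (x2 c m hc)) := by
  refine ⟨⟨BVto c m hc, BVinv c m hc, ?_, ?_⟩,
    ⟨BEto c m hc hm, BEinv c m hc hm, ?_, ?_⟩, ?_, ?_⟩
  · -- V left_inv
    rintro (⟨u | u, h⟩ | b)
    · exact absurd rfl h
    · rfl
    · dsimp only [BVto]
      split_ifs with hb
      · exact congrArg Sum.inr (Fin.ext hb.symm)
      · rfl
  · -- V right_inv
    rintro (⟨v, h⟩ | u)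
    · rcases v with ⟨uu | uu, h2⟩ | b
      · exact absurd rfl h2
      · rfl
      · dsimp only [BVinv, BVto]
        split_ifs with hb
        · exact absurd (congrArg Sum.inr (Fin.ext hb)) h
        · rfl
    · rfl
  · -- E left_inv
    rintro (⟨ℓ | w, h⟩ | ⟨⟨a | w, hp⟩, b⟩)
    · exact absurd rfl h
    · rcases w with ⟨i, f⟩ | ⟨i, a⟩
      · rfl
      · rfl
    · dsimp only [BEto]
      split_ifs with hb
      · rfl
      · rfl
    · exact ((nomatch hp) : _)
  · -- E right_inv
    rintro (⟨e, hcond⟩ | (⟨⟨e, her⟩, ⟨f, hfs⟩⟩ | ⟨f, hfs⟩))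
    · rcases e with ⟨ℓ | ⟨i, f⟩, hw⟩ | ⟨⟨a | w, hp⟩, b⟩
      · exact absurd rfl hw
      · rfl
      · have hb : b.val ≠ 0 := fun h0 => hcond.1 (congrArg Sum.inr (Fin.ext h0))
        dsimp only [BEinv, BEto]
        rw [dif_neg hb]
      · exact ((nomatch hp) : _)
    · rcases e with ⟨ℓ | ⟨i, f'⟩, hw⟩ | ⟨⟨a' | w', hp'⟩, b'⟩
      · exact absurd rfl hw
      · rcases f with ⟨ℓ2 | w2, hw2⟩ | ⟨⟨a | w2, hp2⟩, b⟩
        · exact ((nomatch hfs) : _)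
        · exact ((nomatch hfs) : _)
        · have hf0 : f'.val = 0 := by
            by_contra h0
            rw [H2_r_w hc i f' hw, if_neg h0] at her
            exact Nat.one_ne_zero (congrArg Fin.val (Sum.inr.inj her))
          have hb0 : b.val = 0 := congrArg Fin.val (Sum.inr.inj hfs)
          dsimp only [BEinv, BEto]
          refine congrArg Sum.inr (congrArg Sum.inl (Prod.ext ?_ ?_))
          · exact Subtype.ext (congrArg Sum.inl (Subtype.ext
              (congrArg Sum.inr (congrArg (Prod.mk i) (Fin.ext hf0.symm)))))
          · exact Subtype.ext (congrArg Sum.inr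
              (congrArg (Prod.mk (⟨Sum.inl a, hp2⟩ :
                {e : (mkTwo c (Fin c × Fin m)).E //
                  (mkTwo c (Fin c × Fin m)).s e = Sum.inl ()})) (Fin.ext hb0.symm)))
        · exact ((nomatch hp2) : _)
      · rw [H2_r_l hc a' b' hp'] at her
        exact absurd (congrArg Fin.val (Sum.inr.inj her)) Nat.one_ne_zero
      · exact ((nomatch hp') : _)
    · rcases f with ⟨ℓ2 | w2, hw2⟩ | ⟨⟨a | w2, hp2⟩, b⟩
      · exact ((nomatch hfs) : _)
      · exact ((nomatch hfs) : _)
      · have hb0 : b.val = 0 := congrArg Fin.val (Sum.inr.inj hfs)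
        dsimp only [BEinv, BEto]
        rw [dif_pos hb0]
      · exact ((nomatch hp2) : _)
  · -- s compat
    rintro (⟨ℓ | w, h⟩ | ⟨⟨a | w, hp⟩, b⟩)
    · exact absurd rfl h
    · rcases w with ⟨i, f⟩ | ⟨i, a⟩
      · rfl
      · erw [Equiv.coe_fn_mk, Equiv.coe_fn_mk]
        dsimp only [BEto]
        rw [reduce_s_pair (G := H2 c m hc) (w := x2 c m hc)
          ⟨.inl ⟨.inr (i, ⟨0, hm⟩), fun hh => nomatch hh⟩, _⟩ _ (fun hh => nomatch hh)]
        rfl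
    · erw [Equiv.coe_fn_mk, Equiv.coe_fn_mk]
      dsimp only [BEto, BVto, insplit, mkTwo, Sum.elim_inl, Sum.elim_inr]
      split_ifs with hb
      · rfl
      · rfl
    · exact ((nomatch hp) : _)
  · -- r compat
    rintro (⟨ℓ | w, h⟩ | ⟨⟨a | w, hp⟩, b⟩)
    · exact absurd rfl h
    · rcases w with ⟨i, f⟩ | ⟨i, a⟩
      · erw [Equiv.coe_fn_mk, Equiv.coe_fn_mk]
        dsimp only [BEto]
        rw [insplit_r_inl (G := mkTwo c (W' c m)) (w := Sum.inl ()) (n := c) (fun _ => ⟨1, hc⟩)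
          ⟨.inr (.inl (i, f)), h⟩ rfl]
        refine inl_subtype_congr ?_
        rw [H2_r_w hc i f.1 _, if_neg f.2]
      · erw [Equiv.coe_fn_mk, Equiv.coe_fn_mk]
        dsimp only [BEto]
        rw [insplit_r_inl (G := mkTwo c (W' c m)) (w := Sum.inl ()) (n := c) (fun _ => ⟨1, hc⟩)
          ⟨.inr (.inr (i, a)), h⟩ rfl, reduce_r_pair _ _ (show ¬ (H2 c m hc).r
          (.inr (⟨.inl a, rfl⟩, (⟨0, by omega⟩ : Fin c))) = x2 c m hc by
            erw [H2_r_l (m := m) hc a _ rfl]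
            exact fun hh => Nat.one_ne_zero (congrArg Fin.val (Sum.inr.inj hh)))]
        refine inl_subtype_congr ?_
        erw [H2_r_l (m := m) hc a _ rfl]
    · erw [Equiv.coe_fn_mk, Equiv.coe_fn_mk]
      dsimp only [BEto]
      rw [insplit_r_pair (G := mkTwo c (W' c m)) (w := Sum.inl ()) (n := c) (fun _ => ⟨1, hc⟩)
        ⟨.inl a, hp⟩ b rfl]
      split_ifs with hb
      · rw [reduce_r_new _ (show ¬ (H2 c m hc).r
          (.inr (⟨.inl a, rfl⟩, b)) = x2 c m hc by
            erw [H2_r_l (m := m) hc a _ rfl]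
            exact fun hh => Nat.one_ne_zero (congrArg Fin.val (Sum.inr.inj hh)))]
        refine inl_subtype_congr ?_
        erw [H2_r_l (m := m) hc a _ rfl]
      · refine inl_subtype_congr ?_
        erw [H2_r_l (m := m) hc a _ rfl]
    · exact ((nomatch hp) : _)

end IsoB

section Chains

def mvStep : CKGraph → CKGraph → Prop := fun A B =>
  (MoveO A B ∨ MoveIp A B ∨ MoveRp A B) ∨ (MoveO B A ∨ MoveIp B A ∨ MoveRp B A)

def phiW (c m : ℕ) (hm : 1 ≤ m) (i : Fin c) :
    {w : W' c m // Sum.elim Prod.fst Prod.fst w = i} ≃ Fin (m + c - 1) :=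
  (subtypeSum _).trans ((Equiv.sumCongr
      ((Equiv.subtypeEquivRight (fun _ => Iff.rfl)).trans (prodFst _ i))
      ((Equiv.subtypeEquivRight (fun _ => Iff.rfl)).trans (prodFst _ i))).trans
    (((finPred m).sumCongr (Equiv.refl (Fin c))).trans
      (finSumFinEquiv.trans (finCongr (by omega)))))

lemma mainChain (c : ℕ) (hc : 2 ≤ c) (m : ℕ) (hm : 1 ≤ m) :
    Relation.ReflTransGen mvStep (Gcn c m) (Gcn c (m + c - 1)) := by
  have hc0 : 0 < c := by omega
  have hμ : 0 < m + c - 1 := by omega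
  haveI : Finite (mkTwo c (Fin c × Fin m)).E := finE_mkTwo _ _
  haveI : Finite (mkTwo c (W' c m)).E := finE_mkTwo _ _
  haveI : Finite (H2 c m hc).E :=
    finE_insplit _ _ _ _ (finE_mkTwo _ _)
  haveI : Finite (Gcn c m).E := finE_Gcn _ _
  haveI : Finite (Gcn c (m + c - 1)).E := finE_Gcn _ _
  have reg1 : (mkTwo c (Fin c × Fin m)).Regular (Sum.inl ()) :=
    ⟨⟨⟨Sum.inl ⟨0, hc0⟩, rfl⟩⟩, inferInstance⟩
  have reg2 : (mkTwo c (W' c m)).Regular (Sum.inl ()) :=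
    ⟨⟨⟨Sum.inl ⟨0, hc0⟩, rfl⟩⟩, inferInstance⟩
  have regx : (H2 c m hc).Regular (x2 c m hc) :=
    ⟨⟨⟨Sum.inr (⟨Sum.inl ⟨0, hc0⟩, rfl⟩, ⟨0, hc0⟩), rfl⟩⟩, inferInstance⟩
  have noloop : ∀ e : (H2 c m hc).E,
      ¬ ((H2 c m hc).s e = x2 c m hc ∧ (H2 c m hc).r e = x2 c m hc) := by
    rintro (⟨ℓ | ⟨i, f⟩, hw⟩ | ⟨⟨a | w, hp⟩, b⟩) ⟨h1, h2⟩
    · exact hw rfl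
    · exact ((nomatch h1) : _)
    · rw [H2_r_l hc a b hp] at h2
      exact Nat.one_ne_zero (congrArg Fin.val (Sum.inr.inj h2))
    · exact ((nomatch hp) : _)
  have s1 : MoveO (Gcn c m) ((Gcn c m).outsplit (Sum.inl ()) c (Pfull c m hc0)) :=
    ⟨Sum.inl (), c, Pfull c m hc0, ⟨⟨Sum.inl ⟨0, hc0⟩, rfl⟩⟩,
      fun j => ⟨⟨Sum.inl j, rfl⟩, rfl⟩, noInf _, isoRefl _⟩
  have s2 : MoveIp ((Gcn c m).outsplit (Sum.inl ()) c (Pfull c m hc0)) (H2 c m hc) :=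
    ⟨mkTwo c (Fin c × Fin m), Sum.inl (), c, Ppi Prod.fst, Q1 c m hc, reg1, hc0,
      isoSymm (isoA hc0 hm Prod.fst (fun i => prodFst _ i)), isoRefl _⟩
  have s3 : MoveRp (H2 c m hc) ((H2 c m hc).reduce (x2 c m hc)) :=
    ⟨x2 c m hc, regx, noloop, isoRefl _⟩
  have s4 : MoveIp ((H2 c m hc).reduce (x2 c m hc))
      ((mkTwo c (W' c m)).insplit (Sum.inl ()) c (Ppi (Sum.elim Prod.fst Prod.fst))) :=
    ⟨mkTwo c (W' c m), Sum.inl (), c, (fun _ => ⟨1, hc⟩),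
      Ppi (Sum.elim Prod.fst Prod.fst), reg2, hc0, isoB hc hm, isoRefl _⟩
  have s5 : MoveO (Gcn c (m + c - 1))
      ((mkTwo c (W' c m)).insplit (Sum.inl ()) c (Ppi (Sum.elim Prod.fst Prod.fst))) :=
    ⟨Sum.inl (), c, Pfull c (m + c - 1) hc0, ⟨⟨Sum.inl ⟨0, hc0⟩, rfl⟩⟩,
      fun j => ⟨⟨Sum.inl j, rfl⟩, rfl⟩, noInf _, isoA hc0 hμ _ (phiW c m hm)⟩
  exact Relation.ReflTransGen.head (Or.inl (Or.inl s1))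
    (Relation.ReflTransGen.head (Or.inl (Or.inr (Or.inl s2)))
      (Relation.ReflTransGen.head (Or.inl (Or.inr (Or.inr s3)))
        (Relation.ReflTransGen.head (Or.inl (Or.inr (Or.inl s4)))
          (Relation.ReflTransGen.head (Or.inr (Or.inl s5)) Relation.ReflTransGen.refl))))

lemma zeroChain (c : ℕ) (hc : 2 ≤ c) :
    Relation.ReflTransGen mvStep (Gcn c 0) (Gcn c (N0 c)) := by
  have hc0 : 0 < c := by omega
  haveI : Finite (Gcn c 0).E := finE_Gcn _ _
  haveI : Finite (Gcn c (N0 c)).E := finE_Gcn _ _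
  have s1 : MoveO (Gcn c 0) ((Gcn c 0).outsplit (Sum.inl ()) c (Pfull c 0 hc0)) :=
    ⟨Sum.inl (), c, Pfull c 0 hc0, ⟨⟨Sum.inl ⟨0, hc0⟩, rfl⟩⟩,
      fun j => ⟨⟨Sum.inl j, rfl⟩, rfl⟩, noInf _, isoRefl _⟩
  have s2 : MoveIp ((Gcn c 0).outsplit (Sum.inl ()) c (Pfull c 0 hc0))
      ((Gcn c 0).insplit (Sum.inl ()) c (Q0 c hc)) :=
    ⟨Gcn c 0, Sum.inl (), c, PfullR c hc0, Q0 c hc,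
      ⟨⟨⟨Sum.inl ⟨0, hc0⟩, rfl⟩⟩, inferInstance⟩, hc0, isoA0 hc, isoRefl _⟩
  have s3 : MoveO (Gcn c (N0 c)) ((Gcn c 0).insplit (Sum.inl ()) c (Q0 c hc)) :=
    ⟨ww c hc, c - 1, Pw c hc, ⟨⟨Sum.inr ⟨0, N0_pos hc⟩, rfl⟩⟩,
      fun i => ⟨⟨Sum.inr (finCongr (N0_eq hc).symm (finProdFinEquiv (i, ⟨0, hc0⟩))), rfl⟩, by
        show (finProdFinEquiv.symm (finCongr (N0_eq hc)
          (finCongr (N0_eq hc).symm (finProdFinEquiv (i, ⟨0, hc0⟩))))).1 = i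
        rw [finCongr_cancel, Equiv.symm_apply_apply]⟩,
      noInf _, isoC hc⟩
  exact Relation.ReflTransGen.head (Or.inl (Or.inl s1))
    (Relation.ReflTransGen.head (Or.inl (Or.inr (Or.inl s2)))
      (Relation.ReflTransGen.head (Or.inr (Or.inl s3)) Relation.ReflTransGen.refl))

lemma chainUp (c : ℕ) (hc : 2 ≤ c) (k : ℕ) :
    Relation.ReflTransGen mvStep (Gcn c (c - 1)) (Gcn c (c - 1 + k * (c - 1))) := by
  induction k with
  | zero =>
      rw [Nat.zero_mul, Nat.add_zero]
  | succ n ih =>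
      have h1 : 1 ≤ c - 1 + n * (c - 1) :=
        le_trans (by omega) (Nat.le_add_right _ _)
      have h := mainChain c hc (c - 1 + n * (c - 1)) h1
      have heq : (c - 1 + n * (c - 1)) + c - 1 = c - 1 + (n + 1) * (c - 1) := by
        rw [Nat.succ_mul]
        generalize n * (c - 1) = t
        omega
      rw [heq] at h
      exact ih.trans h

lemma mvStep_symm : Symmetric mvStep := fun _ _ h => h.symm

end Chains
end MEaux

/-- For all integers `c ≥ 2` and `n ≥ 0`, the graphs `G(c,n)` and
`G(c, n+c−1)` are move equivalent via the moves (O), (I+) and (R+). -/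
theorem Gcn_moveEquiv_O_Iplus_Rplus (c n : ℕ) (hc : 2 ≤ c) :
    MoveEquiv (fun A B => MoveO A B ∨ MoveIp A B ∨ MoveRp A B)
      (Gcn c n) (Gcn c (n + c - 1)) := by
  rcases Nat.eq_zero_or_pos n with rfl | hn
  · have h1 := MEaux.zeroChain c hc
    have h2 := MEaux.chainUp c hc (c - 1)
    have h2' : Relation.ReflTransGen MEaux.mvStep (Gcn c (MEaux.N0 c)) (Gcn c (c - 1)) :=
      @Std.Symm.symm _ _ (haveI : Std.Symm MEaux.mvStep := ⟨fun _ _ h => MEaux.mvStep_symm h⟩; inferInstance) _ _ h2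
    have hgoal : (0 : ℕ) + c - 1 = c - 1 := by omega
    rw [hgoal]
    exact ⟨Gcn c (c - 1), h1.trans h2', MEaux.isoRefl _⟩
  · exact ⟨Gcn c (n + c - 1), MEaux.mainChain c hc n hn, MEaux.isoRefl _⟩
end

section
/- For every integer c ≥ 2 and every integer n ≥ 0, the graph G(c,n) is move equivalent via the moves (O) and (I-) to the graph G(c,0) consisting of a single vertex with c loops. -/
open Classical

open CKGraph

open CKGraph

lemma iso_refl (G : CKGraph) : Iso G G := ⟨Equiv.refl _, Equiv.refl _, fun _ => rfl, fun _ => rfl⟩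

section Case2
variable (c : ℕ)

noncomputable def A2 : CKGraph := insplit (Gcn c 0) (Sum.inl ()) 3 (fun _ => 0)
noncomputable def B2 : CKGraph := insplit (Gcn c c) (Sum.inl ()) 2 (fun _ => 0)

variable {c} (hc : 1 ≤ c)

def V2f : (A2 c).V → (B2 c).V
  | .inl ⟨.inl (), h⟩ => absurd rfl h
  | .inl ⟨.inr x, _⟩ => absurd x.isLt (by simp)
  | .inr i => if h : i.val < 2 then .inr ⟨i.val, h⟩ else .inl ⟨.inr ⟨0, by omega⟩, by exact Sum.inr_ne_inl⟩

def V2g : (B2 c).V → (A2 c).V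
  | .inl ⟨.inl (), h⟩ => absurd rfl h
  | .inl ⟨.inr _, _⟩ => .inr 2
  | .inr i => .inr (i.castLE (by omega))

noncomputable def V2 : (A2 c).V ≃ (B2 c).V where
  toFun := V2f hc
  invFun := V2g
  left_inv x := by
    rcases x with ⟨u | x, h⟩ | i
    · exact absurd rfl h
    · exact absurd x.isLt (by simp)
    · have hi := i.isLt
      by_cases h : i.val < 2
      · simp [V2f, V2g, h, Fin.ext_iff]
        rfl
      · simp [V2f, V2g, h, Fin.ext_iff]
        exact congrArg Sum.inr (by omega)
  right_inv x := by
    rcases x with ⟨u | x, h⟩ | i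
    · exact absurd rfl h
    · have := x.isLt
      simp only [V2g, V2f]
      exact congrArg Sum.inl (Subtype.ext (congrArg Sum.inr (Fin.ext (by omega))))
    · have : i.val < 2 := i.isLt
      simp [V2f, V2g, this, Fin.ext_iff]
      rfl

end Case2

section Case2
variable {c : ℕ} (hc : 1 ≤ c)

def E2f : (A2 c).E → (B2 c).E
  | .inl ⟨.inl _, h⟩ => absurd rfl h
  | .inl ⟨.inr g, _⟩ => absurd g.isLt (by omega)
  | .inr (⟨.inl f, _⟩, i) =>
      if h : i.val < 2 then .inr (⟨.inl f, rfl⟩, ⟨i.val, h⟩)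
      else .inl ⟨.inr f, by simp [Gcn]⟩
  | .inr (⟨.inr g, _⟩, _) => absurd g.isLt (by omega)

def E2g : (B2 c).E → (A2 c).E
  | .inl ⟨.inl _, h⟩ => absurd rfl h
  | .inl ⟨.inr g, _⟩ => .inr (⟨.inl g, rfl⟩, 2)
  | .inr (⟨.inl f, _⟩, i) => .inr (⟨.inl f, rfl⟩, i.castLE (by omega))
  | .inr (⟨.inr _, h⟩, _) => absurd h (by simp [Gcn])

noncomputable def E2 : (A2 c).E ≃ (B2 c).E where
  toFun := E2f
  invFun := E2g
  left_inv x := by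
    rcases x with ⟨f | g, h⟩ | ⟨⟨f | g, h⟩, i⟩
    · exact absurd rfl h
    · exact absurd g.isLt (by omega)
    · have hi := i.isLt
      by_cases h2 : i.val < 2
      · simp [E2f, E2g, h2, Fin.ext_iff]
        rfl
      · simp only [E2f, E2g, h2, dif_neg, not_false_iff]
        have h3 : (2 : Fin 3) = i := by omega
        subst h3; rfl
    · exact absurd g.isLt (by omega)
  right_inv x := by
    rcases x with ⟨f | g, h⟩ | ⟨⟨f | g, h⟩, i⟩
    · exact absurd rfl h
    · simp [E2f, E2g]
      rfl
    · have hi := i.isLt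
      have h2 : ((i.castLE (by omega : 2 ≤ 3)) : Fin 3).val < 2 := by simp; omega
      simp [E2f, E2g, h2, Fin.ext_iff]
      exact dif_pos hi
    · exact absurd h (by simp [Gcn])

lemma iso2 (hc : 1 ≤ c) : Iso (A2 c) (B2 c) := by
  refine ⟨V2 hc, E2, fun e => ?_, fun e => ?_⟩ <;>
  · rcases e with ⟨f | g, h⟩ | ⟨⟨f | g, h⟩, i⟩
    · exact absurd rfl h
    · exact absurd g.isLt (by omega)
    · have hi := i.isLt
      obtain rfl | rfl | rfl : i = 0 ∨ i = 1 ∨ i = 2 := by omega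
      all_goals simp [A2, B2, E2, E2f, V2, V2f, insplit, Gcn]
      all_goals rfl
    · exact absurd g.isLt (by omega)

end Case2

section Case3
variable (c m : ℕ)

/-- outsplit of `Gcn c (m+1+c)` at the source `w`, splitting its edges into `m+1` and `c`. -/
noncomputable def S3 : CKGraph :=
  outsplit (Gcn c (m + 1 + c)) (Sum.inr ⟨0, by omega⟩)
    2 (fun e => Sum.elim (fun _ => 0) (fun g : Fin (m + 1 + c) => if g.val < m + 1 then 0 else 1) e.1)

noncomputable def H3 : CKGraph := insplit (S3 c m) (Sum.inl ⟨Sum.inl (), by exact Sum.inl_ne_inr⟩) 2 (fun _ => 0)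

noncomputable def A3 : CKGraph := insplit (Gcn c (m + 1)) (Sum.inl ()) 3 (fun _ => 0)

variable {c m}

def V3f : (A3 c m).V → (H3 c m).V
  | .inl ⟨.inl (), h⟩ => absurd rfl h
  | .inl ⟨.inr _, _⟩ => .inl ⟨.inr 0, by exact Sum.inr_ne_inl⟩
  | .inr i => if h : i.val < 2 then .inr ⟨i.val, h⟩ else .inl ⟨.inr 1, by exact Sum.inr_ne_inl⟩

def V3g : (H3 c m).V → (A3 c m).V
  | .inl ⟨.inl ⟨.inl (), _⟩, h⟩ => (h rfl).elim
  | .inl ⟨.inl ⟨.inr x, hx⟩, _⟩ =>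
      (hx (congrArg Sum.inr (by have := x.isLt; omega))).elim
  | .inl ⟨.inr j, _⟩ => if j.val = 0 then .inl ⟨.inr ⟨0, by omega⟩, by exact Sum.inr_ne_inl⟩ else .inr 2
  | .inr i => .inr (i.castLE (by omega))

noncomputable def V3 : (A3 c m).V ≃ (H3 c m).V where
  toFun := V3f
  invFun := V3g
  left_inv x := by
    rcases x with ⟨u | x, h⟩ | i
    · exact absurd rfl h
    · have := x.isLt
      simp only [V3f, V3g, if_pos rfl]
      exact congrArg Sum.inl (Subtype.ext (congrArg Sum.inr (by omega)))
    · have hi := i.isLt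
      by_cases h2 : i.val < 2
      · simp [V3f, V3g, h2, Fin.ext_iff]
        rfl
      · simp only [V3f, V3g, dif_neg h2]
        obtain rfl : i = 2 := by omega
        rfl
  right_inv x := by
    rcases x with ⟨⟨u | x, hx⟩ | j, h⟩ | i
    · exact (h rfl).elim
    · exact (hx (congrArg Sum.inr (by have := x.isLt; omega))).elim
    · have hj := j.isLt
      by_cases h0 : j.val = 0
      · obtain rfl : j = 0 := Fin.ext h0
        rfl
      · obtain rfl : j = 1 := by omega
        rfl
    · have hi := i.isLt
      obtain rfl | rfl : i = 0 ∨ i = 1 := by omega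
      all_goals rfl
end Case3

section Case3
variable {c m : ℕ}

lemma S3_s_inl_loop (f : Fin c) (h) :
    (S3 c m).s (.inl ⟨.inl f, h⟩) = Sum.inl ⟨Sum.inl (), by exact Sum.inl_ne_inr⟩ := by
  show (if h' : (Gcn c (m+1+c)).s (.inl f) = Sum.inr ⟨0, by omega⟩ then _ else _) = _
  exact dif_neg (by exact Sum.inl_ne_inr)

lemma S3_s_inl_src (g : Fin (m + 1 + c)) (h) :
    (S3 c m).s (.inl ⟨.inr g, h⟩) =
      Sum.inr (if g.val < m + 1 then 0 else 1) := by
  show (if h' : (Gcn c (m+1+c)).s (.inr g) = Sum.inr ⟨0, by omega⟩ then _ else _) = _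
  exact dif_pos rfl

def E3f : (A3 c m).E → (H3 c m).E
  | .inl ⟨.inl _, h⟩ => (h rfl).elim
  | .inl ⟨.inr g, _⟩ =>
      .inl ⟨.inl ⟨.inr ⟨g.val, by have := g.isLt; omega⟩, by simp [Gcn]⟩,
        by exact fun hh => Sum.inr_ne_inl ((S3_s_inl_src _ _).symm.trans hh)⟩
  | .inr (⟨.inl f, _⟩, i) =>
      if h : i.val < 2 then
        .inr (⟨.inl ⟨.inl f, by simp [Gcn]⟩, by exact S3_s_inl_loop _ _⟩, ⟨i.val, h⟩)
      else
        .inl ⟨.inl ⟨.inr ⟨m + 1 + f.val, by have := f.isLt; omega⟩, by simp [Gcn]⟩,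
          by exact fun hh => Sum.inr_ne_inl ((S3_s_inl_src _ _).symm.trans hh)⟩
  | .inr (⟨.inr _, h⟩, _) => absurd h (by simp [Gcn])

def E3g : (H3 c m).E → (A3 c m).E
  | .inl ⟨.inl ⟨.inl f, hr⟩, h⟩ => absurd (S3_s_inl_loop f hr) h
  | .inl ⟨.inl ⟨.inr g, _⟩, _⟩ =>
      if hg : g.val < m + 1 then .inl ⟨.inr ⟨g.val, hg⟩, by simp [Gcn]⟩
      else .inr (⟨.inl ⟨g.val - (m+1), by have := g.isLt; omega⟩, rfl⟩, 2)
  | .inl ⟨.inr (⟨_, he⟩, _), _⟩ => absurd he (by simp [Gcn])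
  | .inr (⟨.inl ⟨.inl f, _⟩, _⟩, j) => .inr (⟨.inl f, rfl⟩, ⟨j.val, by have := j.isLt; omega⟩)
  | .inr (⟨.inl ⟨.inr g, hr⟩, h⟩, _) =>
      absurd h (by rw [S3_s_inl_src]; simp)
  | .inr (⟨.inr (⟨_, he⟩, _), _⟩, _) => absurd he (by simp [Gcn])

noncomputable def E3 : (A3 c m).E ≃ (H3 c m).E where
  toFun := E3f
  invFun := E3g
  left_inv x := by
    rcases x with ⟨f | g, h⟩ | ⟨⟨f | g, h⟩, i⟩
    · exact (h rfl).elim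
    · have := g.isLt
      simp only [E3f, E3g]
      first
      | rfl
      | exact dif_pos (by omega)
    · have hi := i.isLt
      by_cases h2 : i.val < 2
      · simp only [E3f, dif_pos h2, E3g]
        obtain rfl | rfl : i = 0 ∨ i = 1 := by omega
        all_goals rfl
      · simp only [E3f, dif_neg h2, E3g]
        generalize Nat.decLt (↑i) 2 = d
        cases d
        case isTrue hh => exact absurd hh h2
        refine (dif_neg (by show ¬ (m + 1 + f.val < m + 1); omega)).trans ?_
        have : m + 1 + f.val - (m + 1) = f.val := by omega
        exact congrArg Sum.inr (Prod.ext_iff.mpr ⟨Subtype.ext (congrArg Sum.inl (Fin.ext this)),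
          by show (2 : Fin 3) = i; omega⟩)
    · exact absurd h (by simp [Gcn])
  right_inv x := by
    rcases x with ⟨⟨f | g, hr⟩ | ⟨⟨e, he⟩, j2⟩, h⟩ | ⟨⟨⟨f | g, hr⟩ | ⟨⟨e, he⟩, j2⟩, h⟩, j⟩
    · exact absurd (S3_s_inl_loop f hr) h
    · have hg := g.isLt
      by_cases h1 : g.val < m + 1
      · simp only [E3g, dif_pos h1, E3f]
        generalize Nat.decLt (↑g) (m + 1) = d
        cases d with
        | isFalse hn => exact absurd h1 hn
        | isTrue _ => rfl
      · simp only [E3g, dif_neg h1, E3f]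
        generalize Nat.decLt (↑g) (m + 1) = d
        cases d
        case isTrue hh => exact absurd hh h1
        exact congrArg Sum.inl (Subtype.ext (congrArg Sum.inl (Subtype.ext (congrArg Sum.inr
          (Fin.ext (show m + 1 + (g.val - (m+1)) = g.val by omega))))))
    · exact absurd he (by simp [Gcn])
    · have hj := j.isLt
      simp only [E3g, E3f]
      refine (dif_pos hj).trans ?_
      try exact congrArg Sum.inr (Prod.ext_iff.mpr ⟨Subtype.ext rfl, by simp [Fin.ext_iff]⟩)
    · exact absurd h (by rw [S3_s_inl_src]; simp)
    · exact absurd he (by simp [Gcn])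

end Case3

section Case3
variable {c m : ℕ}

lemma A3_s_inl (e h) : (A3 c m).s (.inl ⟨e, h⟩) = .inl ⟨(Gcn c (m+1)).s e, h⟩ := rfl
lemma A3_s_inr (e) (i : Fin 3) : (A3 c m).s (.inr (e, i)) = .inr i := rfl
lemma A3_r_inl (e h) : (A3 c m).r (.inl ⟨e, h⟩) = .inr 0 := by
  show (if h' : (Gcn c (m+1)).r e = Sum.inl () then _ else _) = _
  exact dif_pos (show (Gcn c (m+1)).r e = Sum.inl () from rfl)
lemma A3_r_inr (e) (i : Fin 3) : (A3 c m).r (.inr (e, i)) = .inr 0 := by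
  show (if h' : (Gcn c (m+1)).r e.1 = Sum.inl () then _ else _) = _
  exact dif_pos (show (Gcn c (m+1)).r e.1 = Sum.inl () from rfl)

lemma H3_s_inl (e h) : (H3 c m).s (.inl ⟨e, h⟩) = .inl ⟨(S3 c m).s e, h⟩ := rfl
lemma H3_s_inr (e) (j : Fin 2) : (H3 c m).s (.inr (e, j)) = .inr j := rfl
lemma H3_r_inl (x hx h) : (H3 c m).r (.inl ⟨.inl ⟨x, hx⟩, h⟩) = .inr 0 := by
  show (if h' : (S3 c m).r (.inl ⟨x, hx⟩) = Sum.inl ⟨Sum.inl (), by exact Sum.inl_ne_inr⟩ then _ else _) = _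
  exact dif_pos (show (S3 c m).r (.inl ⟨x, hx⟩) = Sum.inl ⟨Sum.inl (), by exact Sum.inl_ne_inr⟩ from rfl)
lemma H3_r_inr (x hx h) (j : Fin 2) :
    (H3 c m).r (.inr (⟨.inl ⟨x, hx⟩, h⟩, j)) = .inr 0 := by
  show (if h' : (S3 c m).r (.inl ⟨x, hx⟩) = Sum.inl ⟨Sum.inl (), by exact Sum.inl_ne_inr⟩ then _ else _) = _
  exact dif_pos (show (S3 c m).r (.inl ⟨x, hx⟩) = Sum.inl ⟨Sum.inl (), by exact Sum.inl_ne_inr⟩ from rfl)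

lemma iso3 : Iso (A3 c m) (H3 c m) := by
  refine ⟨V3, E3, fun e => ?_, fun e => ?_⟩
  · rcases e with ⟨f | g, h⟩ | ⟨⟨f | g, h⟩, i⟩
    · exact (h rfl).elim
    · have := g.isLt
      exact congrArg Sum.inl (Subtype.ext (α := (S3 c m).V)
        ((S3_s_inl_src _ _).trans (congrArg Sum.inr (if_pos this))))
    · have hi := i.isLt
      by_cases h2 : i.val < 2
      · obtain rfl | rfl : i = 0 ∨ i = 1 := by omega
        all_goals rfl
      · obtain rfl : i = 2 := by omega
        exact congrArg Sum.inl (Subtype.ext (α := (S3 c m).V) ((S3_s_inl_src _ _).trans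
          (congrArg Sum.inr (if_neg (by show ¬ (m + 1 + f.val < m + 1); omega)))))
    · exact absurd h (by simp [Gcn])
  · rcases e with ⟨f | g, h⟩ | ⟨⟨f | g, h⟩, i⟩
    · exact (h rfl).elim
    · exact (H3_r_inl _ _ _).trans (congrArg V3f (A3_r_inl _ _)).symm
    · have hi := i.isLt
      by_cases h2 : i.val < 2
      · obtain rfl | rfl : i = 0 ∨ i = 1 := by omega
        all_goals exact (H3_r_inr _ _ _ _).trans (congrArg V3f (A3_r_inr _ _)).symm
      · obtain rfl : i = 2 := by omega
        exact (H3_r_inl _ _ _).trans (congrArg V3f (A3_r_inr _ _)).symm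
    · exact absurd h (by simp [Gcn])

end Case3

section Case1
variable (a b : ℕ)

/-- `M1` : outsplit of `Gcn (a+b+2) (a+1)` at the loop vertex, loops split into `b+1` and `a+1`. -/
noncomputable def M1 : CKGraph :=
  outsplit (Gcn (a+b+2) (a+1)) (Sum.inl ()) 2
    (fun e => Sum.elim (fun f : Fin (a+b+2) => if f.val < b+1 then 0 else 1) (fun _ => 0) e.1)

/-- `K1` : outsplit of `Gcn (a+b+2) 0` at the loop vertex, loops split into `b+1` and `a+1`. -/
noncomputable def K1 : CKGraph :=
  outsplit (Gcn (a+b+2) 0) (Sum.inl ()) 2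
    (fun e => Sum.elim (fun f : Fin (a+b+2) => if f.val < b+1 then 0 else 1) (fun _ => 0) e.1)

/-- `N1` : insplit of `K1` at the second vertex with the trivial 2-part partition. -/
noncomputable def N1 : CKGraph := insplit (K1 a b) (Sum.inr 1) 2 (fun _ => 0)

variable {a b}

lemma K1_s (f : Fin (a+b+2)) (h) (i : Fin 2) :
    (K1 a b).s (.inr (⟨.inl f, h⟩, i)) = .inr (if f.val < b+1 then 0 else 1) := by
  show (if h' : (Gcn (a+b+2) 0).s (.inl f) = Sum.inl () then _ else _) = _
  exact dif_pos (show (Gcn (a+b+2) 0).s (.inl f) = Sum.inl () from rfl)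

lemma K1_r (e) (i : Fin 2) : (K1 a b).r (.inr (e, i)) = .inr i := rfl

lemma M1_s_loop (f : Fin (a+b+2)) (h) (i : Fin 2) :
    (M1 a b).s (.inr (⟨.inl f, h⟩, i)) = .inr (if f.val < b+1 then 0 else 1) := by
  show (if h' : (Gcn (a+b+2) (a+1)).s (.inl f) = Sum.inl () then _ else _) = _
  exact dif_pos (show (Gcn (a+b+2) (a+1)).s (.inl f) = Sum.inl () from rfl)

lemma M1_s_src (g : Fin (a+1)) (h) (i : Fin 2) :
    (M1 a b).s (.inr (⟨.inr g, h⟩, i)) = .inl ⟨.inr ⟨0, by omega⟩, by exact Sum.inr_ne_inl⟩ := by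
  show (if h' : (Gcn (a+b+2) (a+1)).s (.inr g) = Sum.inl () then _ else _) = _
  exact dif_neg (by exact Sum.inr_ne_inl)

lemma M1_r (e) (i : Fin 2) : (M1 a b).r (.inr (e, i)) = .inr i := rfl

def V1f : (N1 a b).V → (M1 a b).V
  | .inl ⟨.inl ⟨.inl (), hx⟩, _⟩ => (hx rfl).elim
  | .inl ⟨.inl ⟨.inr x, _⟩, _⟩ => x.elim0
  | .inl ⟨.inr _, _⟩ => .inr 0
  | .inr i => if i.val = 0 then .inr 1 else .inl ⟨.inr ⟨0, by omega⟩, by exact Sum.inr_ne_inl⟩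

def V1g : (M1 a b).V → (N1 a b).V
  | .inl ⟨.inl (), hx⟩ => (hx rfl).elim
  | .inl ⟨.inr _, _⟩ => .inr 1
  | .inr i => if i.val = 0 then .inl ⟨.inr 0, fun hh => absurd (Sum.inr.inj hh) (by decide)⟩ else .inr 0

noncomputable def V1 : (N1 a b).V ≃ (M1 a b).V where
  toFun := V1f
  invFun := V1g
  left_inv x := by
    rcases x with ⟨⟨u | x, hx⟩ | j, h⟩ | i
    · exact (hx rfl).elim
    · exact x.elim0
    · have hj : j ≠ 1 := fun hh => h (congrArg Sum.inr hh)
      simp only [V1f, V1g, if_pos rfl]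
      exact congrArg Sum.inl (Subtype.ext (congrArg Sum.inr (by omega)))
    · have hi := i.isLt
      by_cases h0 : i.val = 0
      · simp only [V1f, V1g, if_pos h0, if_neg (by norm_num : ¬ ((1:Fin 2)).val = 0)]
        obtain rfl : i = 0 := Fin.ext h0
        rfl
      · simp only [V1f, V1g, if_neg h0, if_pos rfl]
        obtain rfl : i = 1 := by omega
        rfl
  right_inv x := by
    rcases x with ⟨u | x, hx⟩ | i
    · exact (hx rfl).elim
    · have := x.isLt
      simp only [V1g, V1f, if_neg (by norm_num : ¬ ((1:Fin 2)).val = 0)]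
      exact congrArg Sum.inl (Subtype.ext (congrArg Sum.inr (by omega)))
    · have hi := i.isLt
      by_cases h0 : i.val = 0
      · simp only [V1g, V1f, if_pos h0]
        obtain rfl : i = 0 := Fin.ext h0
        rfl
      · simp only [V1g, V1f, if_neg h0, if_pos rfl]
        obtain rfl : i = 1 := by omega
        rfl

end Case1

section Case1
variable {a b : ℕ}

def E1f : (N1 a b).E → (M1 a b).E
  | .inl ⟨.inl ⟨_, he⟩, _⟩ => (he rfl).elim
  | .inl ⟨.inr (⟨.inl f, hf⟩, i), _⟩ => .inr (⟨.inl f, rfl⟩, i)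
  | .inl ⟨.inr (⟨.inr g, _⟩, _), _⟩ => g.elim0
  | .inr (⟨.inl ⟨_, he⟩, _⟩, _) => (he rfl).elim
  | .inr (⟨.inr (⟨.inl f, hf⟩, i), h⟩, j) =>
      if j.val = 0 then .inr (⟨.inl f, rfl⟩, i)
      else .inr (⟨.inr ⟨f.val - (b+1), by have := f.isLt; omega⟩, rfl⟩, i)
  | .inr (⟨.inr (⟨.inr g, _⟩, _), _⟩, _) => g.elim0

def E1g : (M1 a b).E → (N1 a b).E
  | .inl ⟨_, he⟩ => (he rfl).elim
  | .inr (⟨.inl f, _⟩, i) =>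
      if hf : f.val < b+1 then
        .inl ⟨.inr (⟨.inl f, rfl⟩, i),
          by exact fun hh => absurd (Sum.inr.inj ((K1_s _ _ _).symm.trans hh)) (by simp [hf])⟩
      else
        .inr (⟨.inr (⟨.inl f, rfl⟩, i), by exact (K1_s _ _ _).trans (congrArg Sum.inr (if_neg hf))⟩, 0)
  | .inr (⟨.inr g, _⟩, i) =>
      .inr (⟨.inr (⟨.inl ⟨b + 1 + g.val, by have := g.isLt; omega⟩, rfl⟩, i),
        by exact (K1_s _ _ _).trans (congrArg Sum.inr (if_neg (by show ¬ (b + 1 + g.val < b + 1); omega)))⟩, 1)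

noncomputable def E1 : (N1 a b).E ≃ (M1 a b).E where
  toFun := E1f
  invFun := E1g
  left_inv x := by
    rcases x with ⟨⟨e, he⟩ | ⟨⟨f | g, hf⟩, i⟩, h⟩ | ⟨⟨⟨e, he⟩ | ⟨⟨f | g, hf⟩, i⟩, h⟩, j⟩
    · exact (he rfl).elim
    · have hlt : f.val < b + 1 := by
        by_contra hge
        rw [K1_s, if_neg hge] at h
        exact h rfl
      simp only [E1f, E1g, dif_pos hlt]
      exact dif_pos hlt
    · exact g.elim0
    · exact (he rfl).elim
    · have hge : ¬ f.val < b + 1 := by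
        intro hlt
        rw [K1_s, if_pos hlt] at h
        exact absurd (Sum.inr.inj h) (by decide)
      have hj := j.isLt
      by_cases h0 : j.val = 0
      · simp only [E1f, E1g, if_pos h0, dif_neg hge]
        obtain rfl : j = 0 := Fin.ext h0
        exact dif_neg hge
      · simp only [E1f, E1g, if_neg h0]
        obtain rfl : j = 1 := by omega
        refine congrArg Sum.inr (Prod.ext_iff.mpr ⟨Subtype.ext (α := (K1 a b).E) ?_, rfl⟩)
        exact congrArg Sum.inr (Prod.ext_iff.mpr ⟨Subtype.ext (α := (Gcn (a+b+2) 0).E)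
          (congrArg Sum.inl (Fin.ext (show b + 1 + (f.val - (b+1)) = f.val by omega))), rfl⟩)
    · exact g.elim0
  right_inv x := by
    rcases x with ⟨e, he⟩ | ⟨⟨f | g, hf⟩, i⟩
    · exact (he rfl).elim
    · by_cases hlt : f.val < b + 1
      · simp only [E1g, dif_pos hlt, E1f]
        generalize Nat.decLt (↑f) (b + 1) = d
        cases d
        case isFalse hn => exact absurd hlt hn
        rfl
      · simp only [E1g, dif_neg hlt, E1f]
        generalize Nat.decLt (↑f) (b + 1) = d
        cases d
        case isTrue hh => exact absurd hh hlt
        rfl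
    · simp only [E1g, E1f, if_neg (by norm_num : ¬ ((1:Fin 2)).val = 0)]
      refine congrArg Sum.inr (Prod.ext_iff.mpr ⟨Subtype.ext ?_, rfl⟩)
      exact congrArg Sum.inr (Fin.ext (show b + 1 + g.val - (b+1) = g.val by omega))

end Case1

section Case1
variable {a b : ℕ}

lemma N1_s_inl (e h) : (N1 a b).s (.inl ⟨e, h⟩) = .inl ⟨(K1 a b).s e, h⟩ := rfl
lemma N1_s_inr (e) (j : Fin 2) : (N1 a b).s (.inr (e, j)) = .inr j := rfl

lemma N1_r_one (x h) : (N1 a b).r (.inl ⟨.inr (x, 1), h⟩) = .inr 0 := by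
  show (if h' : (K1 a b).r (.inr (x, 1)) = .inr 1 then _ else _) = _
  exact dif_pos (K1_r x 1)

lemma N1_r_zero (x h) : (N1 a b).r (.inl ⟨.inr (x, 0), h⟩) =
    .inl ⟨.inr 0, fun hh => absurd (Sum.inr.inj hh) (by decide)⟩ := by
  show (if h' : (K1 a b).r (.inr (x, 0)) = .inr 1 then _ else _) = _
  refine (dif_neg (by exact fun hh => absurd (Sum.inr.inj ((K1_r x 0).symm.trans hh)) (by decide))).trans ?_
  exact congrArg Sum.inl (Subtype.ext (K1_r x 0))

lemma N1_r2_one (x h) (j : Fin 2) : (N1 a b).r (.inr (⟨.inr (x, 1), h⟩, j)) = .inr 0 := by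
  show (if h' : (K1 a b).r (.inr (x, 1)) = .inr 1 then _ else _) = _
  exact dif_pos (K1_r x 1)

lemma N1_r2_zero (x h) (j : Fin 2) : (N1 a b).r (.inr (⟨.inr (x, 0), h⟩, j)) =
    .inl ⟨.inr 0, fun hh => absurd (Sum.inr.inj hh) (by decide)⟩ := by
  show (if h' : (K1 a b).r (.inr (x, 0)) = .inr 1 then _ else _) = _
  refine (dif_neg (by exact fun hh => absurd (Sum.inr.inj ((K1_r x 0).symm.trans hh)) (by decide))).trans ?_
  exact congrArg Sum.inl (Subtype.ext (K1_r x 0))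

lemma iso1 : Iso (N1 a b) (M1 a b) := by
  refine ⟨V1, E1, fun e => ?_, fun e => ?_⟩
  · rcases e with ⟨⟨e0, he⟩ | ⟨⟨f | g, hf⟩, i⟩, h⟩ | ⟨⟨⟨e0, he⟩ | ⟨⟨f | g, hf⟩, i⟩, h⟩, j⟩
    · exact (he rfl).elim
    · have hlt : f.val < b + 1 := by
        by_contra hge
        rw [K1_s, if_neg hge] at h
        exact h rfl
      have hk : (K1 a b).s (.inr (⟨.inl f, hf⟩, i)) = .inr 0 :=
        (K1_s _ _ _).trans (congrArg Sum.inr (if_pos hlt))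
      have key : ∀ (v : (K1 a b).V) (hv : v ≠ Sum.inr 1), v = Sum.inr 0 →
          V1f (Sum.inl ⟨v, hv⟩ : (N1 a b).V) = Sum.inr 0 := by
        rintro v hv rfl
        rfl
      exact ((M1_s_loop _ _ _).trans (congrArg Sum.inr (if_pos hlt))).trans (key _ h hk).symm
    · exact g.elim0
    · exact (he rfl).elim
    · have hge : ¬ f.val < b + 1 := by
        intro hlt
        rw [K1_s, if_pos hlt] at h
        exact absurd (Sum.inr.inj h) (by decide)
      obtain hj | hj : j = 0 ∨ j = 1 := by omega
      all_goals subst hj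
      · exact (M1_s_loop _ _ _).trans (congrArg Sum.inr (if_neg hge))
      · exact M1_s_src _ _ _
    · exact g.elim0
  · rcases e with ⟨⟨e0, he⟩ | ⟨⟨f | g, hf⟩, i⟩, h⟩ | ⟨⟨⟨e0, he⟩ | ⟨⟨f | g, hf⟩, i⟩, h⟩, j⟩
    · exact (he rfl).elim
    · obtain hi | hi : i = 0 ∨ i = 1 := by omega
      all_goals subst hi
      · exact (congrArg V1f (N1_r_zero _ _)).symm
      · exact (congrArg V1f (N1_r_one _ _)).symm
    · exact g.elim0
    · exact (he rfl).elim
    · obtain hi | hi : i = 0 ∨ i = 1 := by omega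
      all_goals obtain hj | hj : j = 0 ∨ j = 1 := by omega
      all_goals subst hi; subst hj
      · exact (congrArg V1f (N1_r2_zero _ _ _)).symm
      · exact (congrArg V1f (N1_r2_zero _ _ _)).symm
      · exact (congrArg V1f (N1_r2_one _ _ _)).symm
      · exact (congrArg V1f (N1_r2_one _ _ _)).symm
    · exact g.elim0

end Case1

section Assembly
open Relation

-- convenient finiteness facts
lemma finE_Gcn (c n : ℕ) : Finite (Gcn c n).E := inferInstanceAs (Finite (Fin c ⊕ Fin n))
lemma finE_K1 (a b : ℕ) : Finite (K1 a b).E :=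
  inferInstanceAs (Finite ({e : Fin (a+b+2) ⊕ Fin 0 // (Gcn (a+b+2) 0).r e ≠ Sum.inl ()} ⊕
    ({e : Fin (a+b+2) ⊕ Fin 0 // (Gcn (a+b+2) 0).r e = Sum.inl ()} × Fin 2)))
lemma finE_S3 (c m : ℕ) : Finite (S3 c m).E :=
  inferInstanceAs (Finite
    ({e : Fin c ⊕ Fin (m+1+c) // (Gcn c (m+1+c)).r e ≠ Sum.inr ⟨0, by omega⟩} ⊕
     ({e : Fin c ⊕ Fin (m+1+c) // (Gcn c (m+1+c)).r e = Sum.inr ⟨0, by omega⟩} × Fin 2)))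

lemma noInf {α : Type} [Finite α] {k : ℕ} (P : α → Fin k) :
    ∀ i j : Fin k, {e | P e = i}.Infinite → {e | P e = j}.Infinite → i = j := by
  intro i j hi _
  exact absurd hi (Set.toFinite _).not_infinite

lemma moveO_M1 (a b : ℕ) : MoveO (Gcn (a+b+2) (a+1)) (M1 a b) := by
  refine ⟨Sum.inl (), 2,
    (fun e => Sum.elim (fun f : Fin (a+b+2) => if f.val < b+1 then 0 else 1) (fun _ => 0) e.1),
    ⟨⟨Sum.inl ⟨0, by omega⟩, rfl⟩⟩, ?_, ?_, iso_refl _⟩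
  · intro i
    obtain hi | hi : i = 0 ∨ i = 1 := by omega
    · exact ⟨⟨Sum.inl ⟨0, by omega⟩, rfl⟩, by simp [hi]⟩
    · refine ⟨⟨Sum.inl ⟨a+b+1, by omega⟩, rfl⟩, by simp [hi]⟩
  · have := finE_Gcn (a+b+2) (a+1)
    exact noInf _

lemma moveO_K1 (a b : ℕ) : MoveO (Gcn (a+b+2) 0) (K1 a b) := by
  refine ⟨Sum.inl (), 2,
    (fun e => Sum.elim (fun f : Fin (a+b+2) => if f.val < b+1 then 0 else 1) (fun _ => 0) e.1),
    ⟨⟨Sum.inl ⟨0, by omega⟩, rfl⟩⟩, ?_, ?_, iso_refl _⟩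
  · intro i
    obtain hi | hi : i = 0 ∨ i = 1 := by omega
    · exact ⟨⟨Sum.inl ⟨0, by omega⟩, rfl⟩, by simp [hi]⟩
    · refine ⟨⟨Sum.inl ⟨a+b+1, by omega⟩, rfl⟩, by simp [hi]⟩
  · have := finE_Gcn (a+b+2) 0
    exact noInf _

lemma moveIm_K1_M1 (a b : ℕ) : MoveIm (K1 a b) (M1 a b) := by
  refine ⟨Sum.inr 1, 2, fun _ => 0, ⟨?_, ?_⟩, by norm_num, iso1⟩
  · refine ⟨⟨Sum.inr (⟨Sum.inl ⟨b+1, by omega⟩, rfl⟩, 0), ?_⟩⟩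
    exact (K1_s _ _ _).trans (congrArg Sum.inr (if_neg (by simp)))
  · have := finE_K1 a b
    exact Subtype.finite

end Assembly

section Assembly2
open Relation

lemma moveIm_Gcc (c : ℕ) (hc : 1 ≤ c) : MoveIm (Gcn c c) (B2 c) := by
  refine ⟨Sum.inl (), 2, fun _ => 0, ⟨⟨⟨Sum.inl ⟨0, hc⟩, rfl⟩⟩, ?_⟩, by norm_num, iso_refl _⟩
  have := finE_Gcn c c
  exact Subtype.finite

lemma moveIm_Gc0_B2 (c : ℕ) (hc : 1 ≤ c) : MoveIm (Gcn c 0) (B2 c) := by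
  refine ⟨Sum.inl (), 3, fun _ => 0, ⟨⟨⟨Sum.inl ⟨0, hc⟩, rfl⟩⟩, ?_⟩, by norm_num, iso2 hc⟩
  have := finE_Gcn c 0
  exact Subtype.finite

lemma moveO_S3 (c m : ℕ) (hc : 1 ≤ c) : MoveO (Gcn c (m+1+c)) (S3 c m) := by
  refine ⟨Sum.inr ⟨0, by omega⟩, 2,
    (fun e => Sum.elim (fun _ => 0) (fun g : Fin (m+1+c) => if g.val < m+1 then 0 else 1) e.1),
    ⟨⟨Sum.inr ⟨0, by omega⟩, rfl⟩⟩, ?_, ?_, iso_refl _⟩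
  · intro i
    obtain hi | hi : i = 0 ∨ i = 1 := by omega
    · exact ⟨⟨Sum.inr ⟨0, by omega⟩, rfl⟩, by simp [hi]⟩
    · exact ⟨⟨Sum.inr ⟨m+1, by omega⟩, rfl⟩, by simp [hi]⟩
  · have := finE_Gcn c (m+1+c)
    exact noInf _

lemma moveIm_S3_H3 (c m : ℕ) (hc : 1 ≤ c) : MoveIm (S3 c m) (H3 c m) := by
  refine ⟨Sum.inl ⟨Sum.inl (), by exact Sum.inl_ne_inr⟩, 2, fun _ => 0,
    ⟨⟨⟨Sum.inl ⟨Sum.inl ⟨0, hc⟩, by simp [Gcn]⟩, S3_s_inl_loop _ _⟩⟩, ?_⟩, by norm_num, iso_refl _⟩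
  have := finE_S3 c m
  exact Subtype.finite

lemma moveIm_Gcm_H3 (c m : ℕ) (hc : 1 ≤ c) : MoveIm (Gcn c (m+1)) (H3 c m) := by
  refine ⟨Sum.inl (), 3, fun _ => 0, ⟨⟨⟨Sum.inl ⟨0, hc⟩, rfl⟩⟩, ?_⟩, by norm_num, iso3⟩
  have := finE_Gcn c (m+1)
  exact Subtype.finite

end Assembly2

theorem Gcn_moveEquiv_O_Iminus' (c n : ℕ) (hc : 2 ≤ c) :
    MoveEquiv (fun A B => MoveO A B ∨ MoveIm A B) (Gcn c n) (Gcn c 0) := by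
  induction n using Nat.strong_induction_on generalizing c with
  | _ n ih =>
    rcases Nat.lt_trichotomy n c with hlt | heq | hgt
    · rcases Nat.eq_zero_or_pos n with rfl | hpos
      · exact ⟨Gcn c 0, .refl, iso_refl _⟩
      · obtain ⟨a, b, rfl, rfl⟩ : ∃ a b, n = a + 1 ∧ c = a + b + 2 :=
          ⟨n - 1, c - n - 1, by omega, by omega⟩
        exact ⟨Gcn (a+b+2) 0,
          .head (Or.inl (Or.inl (moveO_M1 a b)))
            (.head (Or.inr (Or.inr (moveIm_K1_M1 a b)))
              (.head (Or.inr (Or.inl (moveO_K1 a b))) .refl)),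
          iso_refl _⟩
    · subst heq
      exact ⟨Gcn n 0,
        .head (Or.inl (Or.inr (moveIm_Gcc n (by omega))))
          (.head (Or.inr (Or.inr (moveIm_Gc0_B2 n (by omega)))) .refl),
        iso_refl _⟩
    · obtain ⟨m, rfl⟩ : ∃ m, n = m + 1 + c := ⟨n - c - 1, by omega⟩
      obtain ⟨K, hK, hiso⟩ := ih (m + 1) (by omega) c hc
      exact ⟨K,
        .head (Or.inl (Or.inl (moveO_S3 c m (by omega))))
          (.head (Or.inl (Or.inr (moveIm_S3_H3 c m (by omega))))
            (.head (Or.inr (Or.inr (moveIm_Gcm_H3 c m (by omega)))) hK)),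
        hiso⟩

/-- For every `c ≥ 2` and `n ≥ 0`, the graph `G(c,n)` is move
equivalent via the moves (O) and (I-) to the single-vertex graph `G(c,0)`. -/
theorem Gcn_moveEquiv_O_Iminus (c n : ℕ) (hc : 2 ≤ c) :
    MoveEquiv (fun A B => MoveO A B ∨ MoveIm A B) (Gcn c n) (Gcn c 0) := by
  exact Gcn_moveEquiv_O_Iminus' c n hc
end
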